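/- arXiv:1708.00669 — 7 statements merged into one kernel-verified Lean document; each statement's English description precedes it below -/
import Mathlib

section
/- The PR-type binary behaviour p defined by p(a,b|x,y) = 1/2 if a ⊕ b = x·y and p(a,b|x,y) = 0 otherwise (where a,b,x,y ∈ {0,1} and ⊕ is addition mod 2) satisfies the NBTS conditions but violates the classicality equality p(0,0|0,0) + p(0,0|1,1) = p(0,0|0,1) + p(0,0|1,0); in particular, this behaviour is not classical, i.e., it cannot be written as q·p₁(a)·p₂(b|a,x) + (1−q)·p₃(a|b,y)·p₄(b) for any q ∈ [0,1] and conditional probability distributions p₁,p₂,p₃,p₄. -/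
/-- The PR-type binary behaviour `p(a,b|x,y) = 1/2` if `a ⊕ b = x·y`
(and `0` otherwise) satisfies the NBTS conditions but violates the classicality
equality, and in particular is not classical. (Here `Fin 2` arithmetic is mod 2.) -/
theorem pr_box_nbts_not_classical
    (p : Fin 2 → Fin 2 → Fin 2 → Fin 2 → ℝ)
    (hp : ∀ a b x y, p a b x y = if a + b = x * y then (1 : ℝ) / 2 else 0) :
    ((∀ a x x' y, ∑ b, p a b x y = ∑ b, p a b x' y) ∧
     (∀ b x y y', ∑ a, p a b x y = ∑ a, p a b x y')) ∧
    p 0 0 0 0 + p 0 0 1 1 ≠ p 0 0 0 1 + p 0 0 1 0 ∧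
    ¬ ∃ (q : ℝ) (p₁ : Fin 2 → ℝ) (p₂ : Fin 2 → Fin 2 → Fin 2 → ℝ)
        (p₃ : Fin 2 → Fin 2 → Fin 2 → ℝ) (p₄ : Fin 2 → ℝ),
        0 ≤ q ∧ q ≤ 1 ∧
        (∀ a, 0 ≤ p₁ a) ∧ (∑ a, p₁ a = 1) ∧
        (∀ b a x, 0 ≤ p₂ b a x) ∧ (∀ a x, ∑ b, p₂ b a x = 1) ∧
        (∀ a b y, 0 ≤ p₃ a b y) ∧ (∀ b y, ∑ a, p₃ a b y = 1) ∧
        (∀ b, 0 ≤ p₄ b) ∧ (∑ b, p₄ b = 1) ∧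
        (∀ a b x y,
          p a b x y = q * p₁ a * p₂ b a x + (1 - q) * p₃ a b y * p₄ b) := by
  have hne : p 0 0 0 0 + p 0 0 1 1 ≠ p 0 0 0 1 + p 0 0 1 0 := by
    simp only [hp]
    norm_num
  refine ⟨⟨?_, ?_⟩, hne, ?_⟩
  · intro a x x' y
    simp only [Fin.sum_univ_two, hp]
    fin_cases a <;> fin_cases x <;> fin_cases x' <;> fin_cases y <;> simp
  · intro b x y y'
    simp only [Fin.sum_univ_two, hp]
    fin_cases b <;> fin_cases x <;> fin_cases y <;> fin_cases y' <;> simp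
  · rintro ⟨q, p₁, p₂, p₃, p₄, -, -, -, -, -, -, -, -, -, -, hform⟩
    apply hne
    rw [hform 0 0 0 0, hform 0 0 1 1, hform 0 0 0 1, hform 0 0 1 0]
    ring
end

section
/- Let p be a binary two-party behaviour satisfying the NBTS conditions. If the single classicality equality p(0,0|0,0) + p(0,0|1,1) = p(0,0|0,1) + p(0,0|1,0) holds, then the analogous equality p(a,b|0,0) + p(a,b|1,1) = p(a,b|0,1) + p(a,b|1,0) holds for all a, b ∈ {0,1}. -/
/-- For a binary behaviour satisfying NBTS, the single classicality
equality at outcomes `(0,0)` implies the analogous equality at all outcomes. -/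
theorem single_classicality_equality_suffices
    (p : Fin 2 → Fin 2 → Fin 2 → Fin 2 → ℝ)
    (hpos : ∀ a b x y, 0 ≤ p a b x y)
    (hnorm : ∀ x y, ∑ a, ∑ b, p a b x y = 1)
    (hA : ∀ a x x' y, ∑ b, p a b x y = ∑ b, p a b x' y)
    (hB : ∀ b x y y', ∑ a, p a b x y = ∑ a, p a b x y')
    (h00 : p 0 0 0 0 + p 0 0 1 1 = p 0 0 0 1 + p 0 0 1 0) :
    ∀ a b : Fin 2, p a b 0 0 + p a b 1 1 = p a b 0 1 + p a b 1 0 := by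
  have hA' := fun a x x' y => hA a x x' y
  simp only [Fin.sum_univ_two] at hA' hB hnorm
  have n00 := hnorm 0 0; have n01 := hnorm 0 1; have n10 := hnorm 1 0; have n11 := hnorm 1 1
  have a000 := hA' 0 0 1 0; have a001 := hA' 0 0 1 1
  have a100 := hA' 1 0 1 0; have a101 := hA' 1 0 1 1
  have b000 := hB 0 0 0 1; have b010 := hB 0 1 0 1
  have b100 := hB 1 0 0 1; have b110 := hB 1 1 0 1
  intro a b
  fin_cases a <;> fin_cases b <;> simp only [Fin.mk_zero, Fin.mk_one, Fin.isValue] <;> linarith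
end

section
/- The set of extreme points of the binary NBTS polytope (the set of binary two-party behaviours satisfying positivity, normalisation and the NBTS conditions, viewed as a convex subset of ℝ^16) consists of exactly 24 points: the 16 deterministic behaviours p(a,b|x,y) = 1 if a = μ·y ⊕ α and b = ν·x ⊕ β (and 0 otherwise), for α, β, μ, ν ∈ {0,1}, together with the 8 PR-type behaviours p(a,b|x,y) = 1/2 if a ⊕ b = (x ⊕ γ)(y ⊕ δ) ⊕ ε (and 0 otherwise), for γ, δ, ε ∈ {0,1}, where ⊕ denotes addition mod 2. -/
/-!
A point `p` of a polyhedron `{q ∈ A | fᵢ q ≥ 0}` is extreme iff it is the only point of `A` on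
which every constraint tight at `p` is tight. For NBTS behaviours, `q - p` is then a perturbation
changing each block `(x, y)` by `(w, u - w; v - w, w - u - v)`, where `u` may depend on `y` only
and `v` on `x` only.

Each pair of vanishing entries of a block imposes one linear condition on `(u y, v x)`, and at an
extreme point only `u = v = 0` satisfies them all. If some marginal of `p` is not deterministic,
propagating `u y = 1` around the cycle `y, x + 1, y + 1, x` shows that no marginal is
deterministic. Then the centred marginals `u y = P(a = 0 | y) - 1/2`, `v x = P(b = 0 | x) - 1/2`
satisfy all conditions, so all marginals are uniform and, every block having a zero, each block is
perfectly correlated or anticorrelated. With an even number of anticorrelated blocks `p` is the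
midpoint of two deterministic behaviours; with an odd number it is a PR box. If all marginals are
deterministic, so is `p`. Conversely, the zeros of a deterministic behaviour or of a PR box,
together with the affine constraints, leave no freedom.
-/

open Set Filter Topology

theorem mem_extremePoints_polyhedron_iff {E ι : Type*} [AddCommGroup E] [Module ℝ E] [Finite ι]
    (A : AffineSubspace ℝ E) (f : ι → E →ᵃ[ℝ] ℝ) {p : E} :
    p ∈ extremePoints ℝ {q | q ∈ A ∧ ∀ i, 0 ≤ f i q} ↔
      (p ∈ A ∧ ∀ i, 0 ≤ f i p) ∧ ∀ q ∈ A, (∀ i, f i p = 0 → f i q = 0) → q = p := by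
  set P := {q | q ∈ A ∧ ∀ i, 0 ≤ f i q}
  refine ⟨fun hp ↦ ⟨hp.1, fun q hq htight ↦ ?_⟩, fun ⟨hp, huniq⟩ ↦ ⟨hp, ?_⟩⟩
  · -- constraints tight at `p` stay tight along the line through `p` and `q`,
    -- the others stay strict near `p`
    have hline : ∀ᶠ t in 𝓝 (0 : ℝ), p + t • (q - p) ∈ P := by
      have hlineMap (t : ℝ) : p + t • (q - p) = AffineMap.lineMap p q t := by
        rw [AffineMap.lineMap_apply_module', add_comm]
      refine (eventually_all.2 fun i ↦ ?_).mono fun t ht ↦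
        ⟨hlineMap t ▸ AffineMap.lineMap_mem _ hp.1.1 hq, ht⟩
      simp only [hlineMap, AffineMap.apply_lineMap, AffineMap.lineMap_apply_ring']
      rcases (hp.1.2 i).eq_or_lt with h | h
      · simp [← h, htight i h.symm]
      · exact ((Continuous.tendsto (by fun_prop) 0).eventually_const_lt (by simpa using h)).mono
          fun _ ↦ le_of_lt
    have hboth : ∀ᶠ t in 𝓝 (0 : ℝ), p + t • (q - p) ∈ P ∧ p + (-t) • (q - p) ∈ P :=
      hline.and ((continuous_neg.tendsto' 0 0 neg_zero).eventually hline)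
    obtain ⟨t, ⟨hplus, hminus⟩, ht⟩ :=
      ((hboth.filter_mono nhdsWithin_le_nhds).and self_mem_nhdsWithin).exists (f := 𝓝[>] (0 : ℝ))
    have hsub := hp.2 (by simpa [neg_smul, ← sub_eq_add_neg] using hminus) hplus
      (mem_openSegment_sub_add p (t • (q - p)))
    rw [sub_eq_self, smul_eq_zero, sub_eq_zero] at hsub
    exact hsub.resolve_left ht.ne'
  · rintro x₁ ⟨hx₁A, hx₁⟩ x₂ ⟨-, hx₂⟩ ⟨a, b, ha, hb, hab, rfl⟩
    refine huniq x₁ hx₁A fun i hi ↦ ?_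
    rw [Convex.combo_affine_apply hab, smul_eq_mul, smul_eq_mul] at hi
    nlinarith [mul_nonneg ha.le (hx₁ i), mul_nonneg hb.le (hx₂ i)]

namespace NBTS

abbrev Behaviour := Fin 2 → Fin 2 → Fin 2 → Fin 2 → ℝ

def affineSubspace : AffineSubspace ℝ Behaviour where
  carrier := {p | (∀ x y, ∑ a, ∑ b, p a b x y = 1) ∧
    (∀ a x x' y, ∑ b, p a b x y = ∑ b, p a b x' y) ∧
    (∀ b x y y', ∑ a, p a b x y = ∑ a, p a b x y')}
  smul_vsub_vadd_mem' c p q r hp hq hr := by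
    simp only [Set.mem_ofPred_eq, vsub_eq_sub, vadd_eq_add, Pi.add_apply, Pi.smul_apply,
      Pi.sub_apply, smul_eq_mul, Finset.sum_add_distrib, ← Finset.mul_sum,
      Finset.sum_sub_distrib] at *
    refine ⟨fun x y ↦ ?_, fun a x x' y ↦ ?_, fun b x y y' ↦ ?_⟩
    · rw [hp.1, hq.1, hr.1]; ring
    · rw [hp.2.1 a x x', hq.2.1 a x x', hr.2.1 a x x']
    · rw [hp.2.2 b x y y', hq.2.2 b x y y', hr.2.2 b x y y']

def polytope : Set Behaviour := {p |
  (∀ a b x y, 0 ≤ p a b x y) ∧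
  (∀ x y, ∑ a, ∑ b, p a b x y = 1) ∧
  (∀ a x x' y, ∑ b, p a b x y = ∑ b, p a b x' y) ∧
  (∀ b x y y', ∑ a, p a b x y = ∑ a, p a b x y')}

def coord (i : Fin 2 × Fin 2 × Fin 2 × Fin 2) : Behaviour →ᵃ[ℝ] ℝ :=
  LinearMap.toAffineMap
    { toFun p := p i.1 i.2.1 i.2.2.1 i.2.2.2
      map_add' _ _ := rfl
      map_smul' _ _ := rfl }

theorem polytope_eq : polytope = {q | q ∈ affineSubspace ∧ ∀ i, 0 ≤ coord i q} := by
  ext p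
  change (∀ a b x y, 0 ≤ p a b x y) ∧ p ∈ affineSubspace ↔ _
  rw [and_comm]
  simp [coord]

theorem mem_extremePoints_iff {p : Behaviour} : p ∈ extremePoints ℝ polytope ↔
    p ∈ polytope ∧ ∀ q ∈ affineSubspace, (∀ a b x y, p a b x y = 0 → q a b x y = 0) → q = p := by
  rw [polytope_eq, mem_extremePoints_polyhedron_iff]
  simp only [Prod.forall]
  rfl

theorem mem_affineSubspace_iff {p : Behaviour} : p ∈ affineSubspace ↔
    (∀ x y, p 0 0 x y + p 0 1 x y + p 1 0 x y + p 1 1 x y = 1) ∧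
    (∀ a x x' y, p a 0 x y + p a 1 x y = p a 0 x' y + p a 1 x' y) ∧
    (∀ b x y y', p 0 b x y + p 1 b x y = p 0 b x y' + p 1 b x y') := by
  simp only [affineSubspace, Fin.sum_univ_two, add_assoc]
  exact Iff.rfl

section Marginals

variable {p : Behaviour}

theorem sum_eq_one (hp : p ∈ affineSubspace) (x y : Fin 2) :
    p 0 0 x y + p 0 1 x y + p 1 0 x y + p 1 1 x y = 1 :=
  (mem_affineSubspace_iff.1 hp).1 x y

theorem row_sum_eq (hp : p ∈ affineSubspace) (a x x' y : Fin 2) :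
    p a 0 x y + p a 1 x y = p a 0 x' y + p a 1 x' y :=
  (mem_affineSubspace_iff.1 hp).2.1 a x x' y

theorem col_sum_eq (hp : p ∈ affineSubspace) (b x y y' : Fin 2) :
    p 0 b x y + p 1 b x y = p 0 b x y' + p 1 b x y' :=
  (mem_affineSubspace_iff.1 hp).2.2 b x y y'

def transpose (p : Behaviour) : Behaviour := fun a b x y ↦ p b a y x

theorem transpose_mem (hp : p ∈ polytope) : transpose p ∈ polytope := by
  obtain ⟨h1, h2, h3⟩ := mem_affineSubspace_iff.1 hp.2
  refine ⟨fun a b x y ↦ hp.1 b a y x, mem_affineSubspace_iff.2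
    ⟨fun x y ↦ ?_, fun a x x' y ↦ h3 a y x x', fun b x y y' ↦ h2 b y y' x⟩⟩
  simp only [transpose]
  linarith [h1 y x]

/-- `P(a | y)`, read off at `x = 0`. -/
def aliceMarginal (p : Behaviour) (a y : Fin 2) : ℝ := p a 0 0 y + p a 1 0 y

/-- `P(b | x)`, read off at `y = 0`. -/
def bobMarginal (p : Behaviour) (b x : Fin 2) : ℝ := p 0 b x 0 + p 1 b x 0

theorem row_eq_zero_iff (hp : p ∈ polytope) (a x y : Fin 2) :
    p a 0 x y = 0 ∧ p a 1 x y = 0 ↔ aliceMarginal p a y = 0 := by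
  have := row_sum_eq hp.2 a x 0 y
  have := hp.1 a 0 x y
  have := hp.1 a 1 x y
  unfold aliceMarginal
  constructor
  · rintro ⟨h₀, h₁⟩; linarith
  · intro h; constructor <;> linarith

theorem col_eq_zero_iff (hp : p ∈ polytope) (b x y : Fin 2) :
    p 0 b x y = 0 ∧ p 1 b x y = 0 ↔ bobMarginal p b x = 0 :=
  row_eq_zero_iff (transpose_mem hp) b y x

end Marginals

section Perturbations

/-- Changes the first row sum of a `2 × 2` table by `u`, its first column sum by `v`, and its
total by `0`. -/
def blockPerturbation (u v w : ℝ) : Fin 2 → Fin 2 → ℝ :=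
  ![![w, u - w], ![v - w, w - u - v]]

def perturbation (u v : Fin 2 → ℝ) (w : Fin 2 → Fin 2 → ℝ) : Behaviour :=
  fun a b x y ↦ blockPerturbation (u y) (v x) (w x y) a b

theorem add_perturbation_mem {p : Behaviour} (hp : p ∈ affineSubspace) (u v : Fin 2 → ℝ)
    (w : Fin 2 → Fin 2 → ℝ) : p + perturbation u v w ∈ affineSubspace := by
  obtain ⟨h1, h2, h3⟩ := mem_affineSubspace_iff.1 hp
  refine mem_affineSubspace_iff.2 ⟨fun x y ↦ ?_, fun a x x' y ↦ ?_, fun b x y y' ↦ ?_⟩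
  · simp only [Pi.add_apply, perturbation, blockPerturbation, Fin.isValue, Matrix.cons_val',
      Matrix.cons_val_zero, Matrix.cons_val_one, Matrix.cons_val_fin_one]
    linarith [h1 x y]
  · fin_cases a <;> simp only [Pi.add_apply, perturbation, blockPerturbation, Fin.isValue,
      Fin.zero_eta, Fin.mk_one, Matrix.cons_val', Matrix.cons_val_zero, Matrix.cons_val_one,
      Matrix.cons_val_fin_one] <;> linarith [h2 0 x x' y, h2 1 x x' y]
  · fin_cases b <;> simp only [Pi.add_apply, perturbation, blockPerturbation, Fin.isValue,
      Fin.zero_eta, Fin.mk_one, Matrix.cons_val', Matrix.cons_val_zero, Matrix.cons_val_one,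
      Matrix.cons_val_fin_one] <;> linarith [h3 0 x y y', h3 1 x y y']

/-- `(u, v)` extends to a `blockPerturbation u v w` vanishing on the zeros of `q`
(`exists_blockPerturbation`): every pair of zero entries of `q` imposes one linear condition. -/
def Compatible (q : Fin 2 → Fin 2 → ℝ) (u v : ℝ) : Prop :=
  (∀ a, q a 0 = 0 → q a 1 = 0 → u = 0) ∧ (∀ b, q 0 b = 0 → q 1 b = 0 → v = 0) ∧
  (q 0 0 = 0 → q 1 1 = 0 → u + v = 0) ∧ (q 0 1 = 0 → q 1 0 = 0 → u = v)

variable {q : Fin 2 → Fin 2 → ℝ} {u v : ℝ}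

theorem Compatible.transpose (h : Compatible q u v) : Compatible (fun a b ↦ q b a) v u :=
  ⟨h.2.1, h.1, fun h₀ h₁ ↦ by linarith [h.2.2.1 h₀ h₁], fun h₀ h₁ ↦ (h.2.2.2 h₁ h₀).symm⟩

theorem Compatible.exists_blockPerturbation (h : Compatible q u v) :
    ∃ w, ∀ a b, q a b = 0 → blockPerturbation u v w a b = 0 := by
  obtain ⟨hrow, hcol, hanti, hcorr⟩ := h
  simp only [Fin.forall_fin_two] at hrow hcol
  refine ⟨if q 0 0 = 0 then 0 else if q 0 1 = 0 then u else if q 1 0 = 0 then v else u + v,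
    fun a b ↦ ?_⟩
  fin_cases a <;> fin_cases b <;> simp only [blockPerturbation, Fin.isValue, Fin.zero_eta,
    Fin.mk_one, Matrix.cons_val', Matrix.cons_val_zero, Matrix.cons_val_one,
    Matrix.cons_val_fin_one] <;> grind

theorem exists_compatible (hu : ∀ a, q a 0 = 0 → q a 1 = 0 → u = 0) : ∃ v, Compatible q u v := by
  simp only [Fin.forall_fin_two] at hu
  refine ⟨if q 0 0 = 0 ∧ q 1 1 = 0 then -u else if q 0 1 = 0 ∧ q 1 0 = 0 then u else 0, ?_⟩
  simp only [Compatible, Fin.forall_fin_two]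
  grind

theorem compatible_zero_of_col_eq_zero {b : Fin 2} (hu : ∀ a, q a 0 = 0 → q a 1 = 0 → u = 0)
    (hb : q 0 b = 0 ∧ q 1 b = 0) : Compatible q u 0 := by
  simp only [Fin.forall_fin_two] at hu
  simp only [Compatible, Fin.forall_fin_two]
  fin_cases b <;> grind

end Perturbations

section Rigidity

variable {p : Behaviour}

theorem eq_zero_of_perturbation (hp : p ∈ extremePoints ℝ polytope) {u v : Fin 2 → ℝ}
    {w : Fin 2 → Fin 2 → ℝ} (h : ∀ a b x y, p a b x y = 0 → perturbation u v w a b x y = 0) :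
    u = 0 ∧ v = 0 ∧ w = 0 := by
  have he := (mem_extremePoints_iff.1 hp).2 _ (add_perturbation_mem hp.1.2 u v w)
    fun a b x y h0 ↦ by simp [h0, h a b x y h0]
  simp only [add_eq_left, funext_iff, Pi.zero_apply, perturbation] at he
  have hw : ∀ x y, w x y = 0 := fun x y ↦ by simpa [blockPerturbation] using he 0 0 x y
  refine ⟨funext fun y ↦ ?_, funext fun x ↦ ?_, funext fun x ↦ funext (hw x)⟩
  · simpa [blockPerturbation, hw] using he 0 1 0 y
  · simpa [blockPerturbation, hw] using he 1 0 x 0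

theorem exists_eq_zero_of_mem_extremePoints (hp : p ∈ extremePoints ℝ polytope) (x y : Fin 2) :
    ∃ a b, p a b x y = 0 := by
  by_contra! hne
  -- otherwise the block `(x, y)` alone could be perturbed
  have h := eq_zero_of_perturbation hp (u := 0) (v := 0)
    (w := fun x' y' ↦ if x' = x ∧ y' = y then 1 else 0) fun a b x' y' h0 ↦ by
      have : ¬(x' = x ∧ y' = y) := by rintro ⟨rfl, rfl⟩; exact hne a b h0
      fin_cases a <;> fin_cases b <;> simp [perturbation, blockPerturbation, this]
  simpa using congrFun (congrFun h.2.2 x) y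

def MarginallyRigid (p : Behaviour) : Prop :=
  ∀ u v : Fin 2 → ℝ, (∀ x y, Compatible (fun a b ↦ p a b x y) (u y) (v x)) → u = 0 ∧ v = 0

theorem marginallyRigid_of_mem_extremePoints (hp : p ∈ extremePoints ℝ polytope) :
    MarginallyRigid p := fun u v huv ↦ by
    choose w hw using fun x y ↦ (huv x y).exists_blockPerturbation
    exact (eq_zero_of_perturbation hp (w := w) fun a b x y ↦ hw x y a b).imp_right And.left

theorem MarginallyRigid.transpose (h : MarginallyRigid p) : MarginallyRigid (transpose p) :=
  fun u v huv ↦ (h v u fun x y ↦ (huv y x).transpose).symm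

theorem MarginallyRigid.bobMarginal_ne_zero (hp : p ∈ polytope) (hr : MarginallyRigid p)
    {y : Fin 2} (hy : ∀ a, aliceMarginal p a y ≠ 0) (b x : Fin 2) : bobMarginal p b x ≠ 0 := by
  intro hb
  have hrow : ∀ x₀ a, p a 0 x₀ y = 0 → p a 1 x₀ y = 0 → (1 : ℝ) = 0 := fun x₀ a h0 h1 ↦
    (hy a ((row_eq_zero_iff hp a x₀ y).1 ⟨h0, h1⟩)).elim
  have hcol : ∀ y₀, p 0 b x y₀ = 0 ∧ p 1 b x y₀ = 0 := fun y₀ ↦ (col_eq_zero_iff hp b x y₀).2 hb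
  -- propagate `u y = 1` along the path `y, x + 1, y + 1`; the cycle closes at `x`,
  -- where Bob is deterministic and `v x = 0` is compatible with anything
  obtain ⟨v', hv'⟩ := exists_compatible (q := fun a b ↦ p a b (x + 1) y) (hrow (x + 1))
  obtain ⟨u', hu'⟩ := exists_compatible (q := fun b a ↦ p a b (x + 1) (y + 1)) (u := v')
    fun b' h0 h1 ↦ by
      have := (col_eq_zero_iff hp b' (x + 1) y).2
        ((col_eq_zero_iff hp b' (x + 1) (y + 1)).1 ⟨h0, h1⟩)
      exact hv'.2.1 b' this.1 this.2
  have hu'row : ∀ a, p a 0 x (y + 1) = 0 → p a 1 x (y + 1) = 0 → u' = 0 := fun a h0 h1 ↦ by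
    have := (row_eq_zero_iff hp a (x + 1) (y + 1)).2 ((row_eq_zero_iff hp a x (y + 1)).1 ⟨h0, h1⟩)
    exact hu'.2.1 a this.1 this.2
  have hsplit : ∀ i j : Fin 2, i = j ∨ i = j + 1 := by decide
  have hne : ∀ i : Fin 2, i + 1 ≠ i := by decide
  have := hr (fun i ↦ if i = y then 1 else u') (fun j ↦ if j = x then 0 else v') fun x₀ y₀ ↦ by
    rcases hsplit x₀ x with rfl | rfl <;> rcases hsplit y₀ y with rfl | rfl <;>
      simp only [hne, ↓reduceIte]
    · exact compatible_zero_of_col_eq_zero (hrow x₀) (hcol y₀)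
    · exact compatible_zero_of_col_eq_zero hu'row (hcol _)
    · exact hv'
    · exact hu'.transpose
  simpa using congrFun this.1 y

theorem MarginallyRigid.aliceMarginal_ne_zero (hp : p ∈ polytope) (hr : MarginallyRigid p)
    {x : Fin 2} (hx : ∀ b, bobMarginal p b x ≠ 0) (a y : Fin 2) : aliceMarginal p a y ≠ 0 :=
  hr.transpose.bobMarginal_ne_zero (transpose_mem hp) hx a y

theorem MarginallyRigid.marginals_eq_half (hp : p ∈ polytope) (hr : MarginallyRigid p)
    (ha : ∀ a y, aliceMarginal p a y ≠ 0) (hb : ∀ b x, bobMarginal p b x ≠ 0) :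
    (∀ y, aliceMarginal p 0 y = 1 / 2) ∧ ∀ x, bobMarginal p 0 x = 1 / 2 := by
  -- the centred marginals are compatible with every block once no marginal is deterministic
  obtain ⟨hu, hv⟩ := hr (fun y ↦ aliceMarginal p 0 y - 1 / 2) (fun x ↦ bobMarginal p 0 x - 1 / 2)
    fun x y ↦ by
      have := row_sum_eq hp.2 0 x 0 y
      have := col_sum_eq hp.2 0 x y 0
      have := sum_eq_one hp.2 x y
      refine ⟨fun a h0 h1 ↦ (ha a y ((row_eq_zero_iff hp a x y).1 ⟨h0, h1⟩)).elim,
        fun b h0 h1 ↦ (hb b x ((col_eq_zero_iff hp b x y).1 ⟨h0, h1⟩)).elim,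
        fun h0 h1 ↦ ?_, fun h0 h1 ↦ ?_⟩ <;>
      · dsimp only at h0 h1
        simp only [aliceMarginal, bobMarginal]
        linarith
  exact ⟨fun y ↦ by simpa [sub_eq_zero] using congrFun hu y,
    fun x ↦ by simpa [sub_eq_zero] using congrFun hv x⟩

end Rigidity

noncomputable def detBehaviour (f h : Fin 2 → Fin 2) : Behaviour :=
  fun a b x y ↦ if a = f y ∧ b = h x then 1 else 0

noncomputable def prBehaviour (g : Fin 2 → Fin 2 → Fin 2) : Behaviour :=
  fun a b x y ↦ if a + b = g x y then 1 / 2 else 0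

theorem detBehaviour_mem (f h : Fin 2 → Fin 2) : detBehaviour f h ∈ polytope := by
  refine ⟨fun a b x y ↦ by unfold detBehaviour; positivity, ?_⟩
  refine ⟨fun x y ↦ ?_, fun a x x' y ↦ ?_, fun b x y y' ↦ ?_⟩ <;>
    simp [detBehaviour, ite_and, Finset.sum_ite_eq']

theorem prBehaviour_mem (g : Fin 2 → Fin 2 → Fin 2) : prBehaviour g ∈ polytope := by
  have hrow : ∀ a c : Fin 2, ∑ b, (if a + b = c then (1 / 2 : ℝ) else 0) = 1 / 2 := by
    intro a c
    simp only [← eq_sub_iff_add_eq', Finset.sum_ite_eq', Finset.mem_univ, if_true]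
  have hcol : ∀ b c : Fin 2, ∑ a, (if a + b = c then (1 / 2 : ℝ) else 0) = 1 / 2 := by
    intro b c
    simp only [← eq_sub_iff_add_eq, Finset.sum_ite_eq', Finset.mem_univ, if_true]
  refine ⟨fun a b x y ↦ by unfold prBehaviour; positivity, fun x y ↦ ?_, fun a x x' y ↦ ?_,
    fun b x y y' ↦ ?_⟩ <;> simp only [prBehaviour, hrow, hcol]
  norm_num

theorem exists_eq_detBehaviour {p : Behaviour} (hp : p ∈ polytope)
    (hA : ∀ y, ∃ a, aliceMarginal p a y = 0) (hB : ∀ x, ∃ b, bobMarginal p b x = 0) :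
    ∃ f h, p = detBehaviour f h := by
  choose f hf using hA
  choose h hh using hB
  refine ⟨fun y ↦ f y + 1, fun x ↦ h x + 1, ?_⟩
  funext a b x y
  have hr := (row_eq_zero_iff hp (f y) x y).2 (hf y)
  have hc := (col_eq_zero_iff hp (h x) x y).2 (hh x)
  have := sum_eq_one hp.2 x y
  change p a b x y = if a = f y + 1 ∧ b = h x + 1 then 1 else 0
  generalize f y = c at hr ⊢
  generalize h x = d at hc ⊢
  fin_cases a <;> fin_cases b <;> fin_cases c <;> fin_cases d <;> simp_all

theorem eq_prBehaviour {p : Behaviour} {g : Fin 2 → Fin 2 → Fin 2} (hp : p ∈ affineSubspace)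
    (hA : ∀ y, aliceMarginal p 0 y = 1 / 2) (hB : ∀ x, bobMarginal p 0 x = 1 / 2)
    (hz : ∀ a b x y, a + b ≠ g x y → p a b x y = 0) : p = prBehaviour g := by
  funext a b x y
  have := row_sum_eq hp 0 x 0 y
  have := col_sum_eq hp 0 x y 0
  have := sum_eq_one hp x y
  have := hA y
  have := hB x
  simp only [aliceMarginal, bobMarginal] at *
  obtain hg | hg : g x y = 0 ∨ g x y = 1 := by omega
  · have h01 := hz 0 1 x y (by rw [hg]; decide)
    have h10 := hz 1 0 x y (by rw [hg]; decide)
    have h00 : p 0 0 x y = 1 / 2 := by linarith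
    have h11 : p 1 1 x y = 1 / 2 := by linarith
    fin_cases a <;> fin_cases b <;> simp [prBehaviour, hg, h00, h01, h10, h11]
  · have h00 := hz 0 0 x y (by rw [hg]; decide)
    have h11 := hz 1 1 x y (by rw [hg]; decide)
    have h01 : p 0 1 x y = 1 / 2 := by linarith
    have h10 : p 1 0 x y = 1 / 2 := by linarith
    fin_cases a <;> fin_cases b <;> simp [prBehaviour, hg, h00, h01, h10, h11]

theorem eq_zero_of_marginals_eq_half {p : Behaviour} (hp : p ∈ affineSubspace)
    (hA : ∀ y, aliceMarginal p 0 y = 1 / 2) (hB : ∀ x, bobMarginal p 0 x = 1 / 2)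
    (hz : ∀ x y, ∃ a b, p a b x y = 0) (a b x y : Fin 2)
    (hab : a + b ≠ if p 0 0 x y = 0 then 1 else 0) : p a b x y = 0 := by
  have := row_sum_eq hp 0 x 0 y
  have := col_sum_eq hp 0 x y 0
  have := sum_eq_one hp x y
  have := hA y
  have := hB x
  simp only [aliceMarginal, bobMarginal] at *
  have hC : p 0 0 x y = 0 ∨ p 0 0 x y = 1 / 2 := by
    obtain h | h | h | h : p 0 0 x y = 0 ∨ p 0 1 x y = 0 ∨ p 1 0 x y = 0 ∨ p 1 1 x y = 0 := by
      simpa [Fin.exists_fin_two, or_assoc] using hz x y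
    exacts [Or.inl h, Or.inr (by linarith), Or.inr (by linarith), Or.inl (by linarith)]
  rcases hC with hC | hC
  · rw [if_pos hC] at hab
    have h11 : p 1 1 x y = 0 := by linarith
    fin_cases a <;> fin_cases b
    exacts [hC, (hab (by decide)).elim, (hab (by decide)).elim, h11]
  · rw [if_neg (by norm_num [hC])] at hab
    have h01 : p 0 1 x y = 0 := by linarith
    have h10 : p 1 0 x y = 0 := by linarith
    fin_cases a <;> fin_cases b
    exacts [(hab (by decide)).elim, h01, h10, (hab (by decide)).elim]

theorem prBehaviour_add_eq (f h : Fin 2 → Fin 2) :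
    prBehaviour (fun x y ↦ f y + h x) =
      (1 / 2 : ℝ) • detBehaviour f h + (1 / 2 : ℝ) • detBehaviour (f · + 1) (h · + 1) := by
  funext a b x y
  have key : ∀ c d : Fin 2, (if a + b = c + d then (1 / 2 : ℝ) else 0) =
      1 / 2 * (if a = c ∧ b = d then 1 else 0) +
        1 / 2 * (if a = c + 1 ∧ b = d + 1 then 1 else 0) := by
    intro c d
    fin_cases a <;> fin_cases b <;> fin_cases c <;> fin_cases d <;> norm_num <;> decide
  exact key (f y) (h x)

theorem prBehaviour_add_not_mem_extremePoints (f h : Fin 2 → Fin 2) :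
    prBehaviour (fun x y ↦ f y + h x) ∉ extremePoints ℝ polytope := fun hp ↦ by
  have := hp.2 (detBehaviour_mem f h) (detBehaviour_mem _ _)
    ⟨1 / 2, 1 / 2, by norm_num, by norm_num, by norm_num, (prBehaviour_add_eq f h).symm⟩
  have := congrFun (congrFun (congrFun (congrFun this (f 0)) (h 0)) 0) 0
  norm_num [prBehaviour, detBehaviour] at this

/-- A function of two bits has even weight, and is then a sum of functions of one bit each, or odd
weight, and is then `x * y` up to affine terms. -/
theorem exists_eq_add_or_exists_eq_mul (g : Fin 2 → Fin 2 → Fin 2) :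
    (∃ f h : Fin 2 → Fin 2, g = fun x y ↦ f y + h x) ∨
      ∃ γ δ ε : Fin 2, g = fun x y ↦ (x + γ) * (y + δ) + ε := by
  revert g; decide

theorem exists_eq_det_or_pr_of_mem_extremePoints {p : Behaviour}
    (hp : p ∈ extremePoints ℝ polytope) : (∃ f h, p = detBehaviour f h) ∨
      ∃ γ δ ε : Fin 2, p = prBehaviour fun x y ↦ (x + γ) * (y + δ) + ε := by
  have hS := hp.1
  have hr := marginallyRigid_of_mem_extremePoints hp
  by_cases hdet : (∀ y, ∃ a, aliceMarginal p a y = 0) ∧ ∀ x, ∃ b, bobMarginal p b x = 0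
  · exact Or.inl (exists_eq_detBehaviour hS hdet.1 hdet.2)
  have hnd : (∀ a y, aliceMarginal p a y ≠ 0) ∧ ∀ b x, bobMarginal p b x ≠ 0 := by
    simp only [not_and_or, not_forall, not_exists] at hdet
    rcases hdet with ⟨y, hy⟩ | ⟨x, hx⟩
    · have hb := hr.bobMarginal_ne_zero hS hy
      exact ⟨hr.aliceMarginal_ne_zero hS (hb · 0), hb⟩
    · have ha := hr.aliceMarginal_ne_zero hS hx
      exact ⟨ha, hr.bobMarginal_ne_zero hS (ha · 0)⟩
  obtain ⟨hA, hB⟩ := hr.marginals_eq_half hS hnd.1 hnd.2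
  have hpr := eq_prBehaviour hS.2 hA hB
    (eq_zero_of_marginals_eq_half hS.2 hA hB (exists_eq_zero_of_mem_extremePoints hp))
  rcases exists_eq_add_or_exists_eq_mul fun x y ↦ if p 0 0 x y = 0 then 1 else 0 with
    ⟨f, h, hg⟩ | ⟨γ, δ, ε, hg⟩
  · exact (prBehaviour_add_not_mem_extremePoints f h (hg ▸ hpr ▸ hp)).elim
  · exact Or.inr ⟨γ, δ, ε, hg ▸ hpr⟩

theorem detBehaviour_mem_extremePoints (f h : Fin 2 → Fin 2) :
    detBehaviour f h ∈ extremePoints ℝ polytope := by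
  refine mem_extremePoints_iff.2 ⟨detBehaviour_mem f h, fun q hq hz ↦ ?_⟩
  funext a b x y
  have hzero : ∀ a b, ¬(a = f y ∧ b = h x) → q a b x y = 0 :=
    fun a b hab ↦ hz a b x y (by simp [detBehaviour, hab])
  by_cases hab : a = f y ∧ b = h x
  · obtain ⟨rfl, rfl⟩ := hab
    have hsum := hq.1 x y
    rw [Fintype.sum_eq_single (f y) fun a' ha' ↦ Finset.sum_eq_zero fun b' _ ↦
        hzero a' b' (ha' ∘ And.left),
      Fintype.sum_eq_single (h x) fun b' hb' ↦ hzero (f y) b' (hb' ∘ And.right)] at hsum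
    simpa [detBehaviour] using hsum
  · rw [hzero a b hab]
    exact (if_neg hab).symm

theorem bobMarginal_eq_of_support {q : Behaviour} (hq : q ∈ affineSubspace) {x y c : Fin 2}
    (hz : ∀ a b, a + b ≠ c → q a b x y = 0) :
    bobMarginal q 0 x = if c = 0 then aliceMarginal q 0 y else 1 - aliceMarginal q 0 y := by
  have := row_sum_eq hq 0 x 0 y
  have := col_sum_eq hq 0 x y 0
  have := sum_eq_one hq x y
  simp only [aliceMarginal, bobMarginal]
  obtain rfl | rfl : c = 0 ∨ c = 1 := by omega
  · rw [if_pos rfl]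
    linarith [hz 0 1 (by decide), hz 1 0 (by decide)]
  · rw [if_neg (by decide)]
    linarith [hz 0 0 (by decide), hz 1 1 (by decide)]

theorem prBehaviour_mem_extremePoints (γ δ ε : Fin 2) :
    prBehaviour (fun x y ↦ (x + γ) * (y + δ) + ε) ∈ extremePoints ℝ polytope := by
  refine mem_extremePoints_iff.2 ⟨prBehaviour_mem _, fun q hq hz ↦ ?_⟩
  have hsupp : ∀ a b x y, a + b ≠ (x + γ) * (y + δ) + ε → q a b x y = 0 :=
    fun a b x y h ↦ hz a b x y (by simp [prBehaviour, h])
  have hm := fun x y ↦ bobMarginal_eq_of_support hq (hsupp · · x y)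
  -- an odd number of anticorrelated blocks forces all marginals to be uniform
  have hhalf : (∀ y, aliceMarginal q 0 y = 1 / 2) ∧ ∀ x, bobMarginal q 0 x = 1 / 2 := by
    have h00 := hm 0 0
    have h01 := hm 0 1
    have h10 := hm 1 0
    have h11 := hm 1 1
    simp only [Fin.forall_fin_two]
    fin_cases γ <;> fin_cases δ <;> fin_cases ε <;>
      simp only [Fin.isValue, Fin.zero_eta, Fin.mk_one, Fin.reduceAdd, add_zero, zero_add,
        mul_zero, mul_one, one_ne_zero, one_div, ↓reduceIte] at h00 h01 h10 h11 ⊢ <;>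
      refine ⟨⟨?_, ?_⟩, ?_, ?_⟩ <;> linarith
  exact eq_prBehaviour hq hhalf.1 hhalf.2 hsupp

def deterministicBoxes : Set Behaviour := {p | ∃ α β μ ν : Fin 2, p = fun a b x y ↦
  if a = μ * y + α ∧ b = ν * x + β then (1 : ℝ) else 0}

def prBoxes : Set Behaviour := {p | ∃ γ δ ε : Fin 2, p = fun a b x y ↦
  if a + b = (x + γ) * (y + δ) + ε then (1 : ℝ) / 2 else 0}

theorem deterministicBoxes_eq_range : deterministicBoxes =
    range fun fh : (Fin 2 → Fin 2) × (Fin 2 → Fin 2) ↦ detBehaviour fh.1 fh.2 := by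
  have haffine (f : Fin 2 → Fin 2) (y : Fin 2) : f y = (f 1 - f 0) * y + f 0 := by
    fin_cases y <;> simp
  ext p
  constructor
  · rintro ⟨α, β, μ, ν, rfl⟩
    exact ⟨(fun y ↦ μ * y + α, fun x ↦ ν * x + β), rfl⟩
  · rintro ⟨⟨f, h⟩, rfl⟩
    refine ⟨f 0, h 0, f 1 - f 0, h 1 - h 0, funext fun a ↦ funext fun b ↦ funext fun x ↦
      funext fun y ↦ ?_⟩
    rw [← haffine f y, ← haffine h x]
    rfl

theorem prBoxes_eq_range : prBoxes = range fun t : Fin 2 × Fin 2 × Fin 2 ↦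
    prBehaviour fun x y ↦ (x + t.1) * (y + t.2.1) + t.2.2 := by
  ext p
  constructor
  · rintro ⟨γ, δ, ε, rfl⟩
    exact ⟨(γ, δ, ε), rfl⟩
  · rintro ⟨⟨γ, δ, ε⟩, rfl⟩
    exact ⟨γ, δ, ε, rfl⟩

theorem extremePoints_polytope : extremePoints ℝ polytope = deterministicBoxes ∪ prBoxes := by
  rw [deterministicBoxes_eq_range, prBoxes_eq_range]
  ext p
  refine ⟨fun hp ↦ ?_, ?_⟩
  · rcases exists_eq_det_or_pr_of_mem_extremePoints hp with ⟨f, h, rfl⟩ | ⟨γ, δ, ε, rfl⟩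
    exacts [Or.inl ⟨(f, h), rfl⟩, Or.inr ⟨(γ, δ, ε), rfl⟩]
  · rintro (⟨⟨f, h⟩, rfl⟩ | ⟨⟨γ, δ, ε⟩, rfl⟩)
    exacts [detBehaviour_mem_extremePoints f h, prBehaviour_mem_extremePoints γ δ ε]

theorem detBehaviour_injective :
    Function.Injective fun fh : (Fin 2 → Fin 2) × (Fin 2 → Fin 2) ↦ detBehaviour fh.1 fh.2 := by
  rintro ⟨f, h⟩ ⟨f', h'⟩ he
  have key (x y : Fin 2) : f y = f' y ∧ h x = h' x := by
    simpa [detBehaviour] using congrFun (congrFun (congrFun (congrFun he (f y)) (h x)) x) y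
  exact Prod.ext (funext fun y ↦ (key 0 y).1) (funext fun x ↦ (key x 0).2)

theorem prBehaviour_injective : Function.Injective prBehaviour := fun g g' he ↦ by
  funext x y
  simpa [prBehaviour] using congrFun (congrFun (congrFun (congrFun he 0) (g x y)) x) y

theorem ncard_deterministicBoxes_union_prBoxes : (deterministicBoxes ∪ prBoxes).ncard = 24 := by
  have hpattern : Function.Injective fun t : Fin 2 × Fin 2 × Fin 2 ↦
      fun x y : Fin 2 ↦ (x + t.1) * (y + t.2.1) + t.2.2 := by
    decide
  have hpr : Function.Injective fun t : Fin 2 × Fin 2 × Fin 2 ↦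
      prBehaviour fun x y ↦ (x + t.1) * (y + t.2.1) + t.2.2 :=
    prBehaviour_injective.comp hpattern
  have hdisj : Disjoint deterministicBoxes prBoxes := by
    rw [deterministicBoxes_eq_range, prBoxes_eq_range, Set.disjoint_left]
    rintro _ ⟨⟨f, h⟩, rfl⟩ ⟨t, ht⟩
    have := congrFun (congrFun (congrFun (congrFun ht (f 0)) (h 0)) 0) 0
    simp only [prBehaviour, detBehaviour, and_self, ↓reduceIte] at this
    split_ifs at this <;> norm_num at this
  rw [Set.ncard_union_eq hdisj (deterministicBoxes_eq_range ▸ Set.finite_range _)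
    (prBoxes_eq_range ▸ Set.finite_range _), deterministicBoxes_eq_range, prBoxes_eq_range,
    Set.ncard_range_of_injective detBehaviour_injective, Set.ncard_range_of_injective hpr]
  simp [Nat.card_eq_fintype_card]

end NBTS

/-- The extreme points of the binary NBTS polytope are exactly the
16 deterministic behaviours and the 8 PR-type behaviours (24 points in total).
(Here `Fin 2` arithmetic is mod 2.) -/
theorem extremePoints_binary_nbts_polytope :
    ({p : Fin 2 → Fin 2 → Fin 2 → Fin 2 → ℝ |
        (∀ a b x y, 0 ≤ p a b x y) ∧
        (∀ x y, ∑ a, ∑ b, p a b x y = 1) ∧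
        (∀ a x x' y, ∑ b, p a b x y = ∑ b, p a b x' y) ∧
        (∀ b x y y', ∑ a, p a b x y = ∑ a, p a b x y')}.extremePoints ℝ
      =
      {p : Fin 2 → Fin 2 → Fin 2 → Fin 2 → ℝ |
        ∃ α β μ ν : Fin 2, p = fun a b x y =>
          if a = μ * y + α ∧ b = ν * x + β then (1 : ℝ) else 0} ∪
      {p : Fin 2 → Fin 2 → Fin 2 → Fin 2 → ℝ |
        ∃ γ δ ε : Fin 2, p = fun a b x y =>
          if a + b = (x + γ) * (y + δ) + ε then (1 : ℝ) / 2 else 0})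
    ∧
    ({p : Fin 2 → Fin 2 → Fin 2 → Fin 2 → ℝ |
        ∃ α β μ ν : Fin 2, p = fun a b x y =>
          if a = μ * y + α ∧ b = ν * x + β then (1 : ℝ) else 0} ∪
      {p : Fin 2 → Fin 2 → Fin 2 → Fin 2 → ℝ |
        ∃ γ δ ε : Fin 2, p = fun a b x y =>
          if a + b = (x + γ) * (y + δ) + ε then (1 : ℝ) / 2 else 0}).ncard = 24 :=
  ⟨NBTS.extremePoints_polytope, NBTS.ncard_deterministicBoxes_union_prBoxes⟩
end

section
/- The set of extreme points of the binary classical polytope (the set of classical binary two-party behaviours, viewed as a convex subset of ℝ^16) consists of exactly 12 points: the deterministic behaviours p(a,b|x,y) = 1 if a = μ·y ⊕ α and b = ν·x ⊕ β (and 0 otherwise), for α, β, μ, ν ∈ {0,1} with μ and ν not both equal to 1, where ⊕ denotes addition mod 2. -/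
/-!
The classical polytope is the convex join of the two one-way sets `p₁(a) p₂(b|a,x)` and
`p₄(b) p₃(a|b,y)`. Each one-way set is convex (mix, then renormalise the conditional) and is the
convex hull of its deterministic points: a conditional `p₂(b|a,x)` is the `x`-marginal of the
product law `∏ x, p₂(f x|a,x)` on response functions `f : X → β`. So the polytope is the convex
hull of the deterministic behaviours. These are `0/1`-vectors, hence vertices of the unit cube,
which contains the polytope; so they are exactly its extreme points. For binary parties every
`f : Fin 2 → Fin 2` is affine, giving `8 + 8 - 4 = 12` points (the constant ones are shared).
-/

open Finset Set

theorem exists_mem_stdSimplex_mul_eq {ι : Type*} [Fintype ι] [Nonempty ι] {f : ι → ℝ}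
    (hf : ∀ i, 0 ≤ f i) : ∃ r ∈ stdSimplex ℝ ι, ∀ i, f i = (∑ j, f j) * r i := by
  classical
  rcases eq_or_ne (∑ j, f j) 0 with h | h
  · have hf0 : ∀ i, f i = 0 := fun i =>
      (Finset.sum_eq_zero_iff_of_nonneg fun j _ => hf j).mp h i (mem_univ i)
    exact ⟨_, single_mem_stdSimplex ℝ (Classical.arbitrary ι), fun i => by simp [hf0]⟩
  · refine ⟨fun i => f i / ∑ j, f j, ⟨fun i => div_nonneg (hf i) (sum_nonneg fun j _ => hf j), ?_⟩,
      fun i => (mul_div_cancel₀ _ h).symm⟩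
    rw [← Finset.sum_div, div_self h]

theorem Fintype.sum_ite_eval_prod_eq {X β : Type*} [Fintype X] [DecidableEq X] [Fintype β]
    [DecidableEq β] {P : X → β → ℝ} (hP : ∀ x, ∑ b, P x b = 1) (x₀ : X) (b₀ : β) :
    ∑ f : X → β, (if f x₀ = b₀ then ∏ x, P x (f x) else 0) = P x₀ b₀ := by
  set Q : X → β → ℝ := fun x b => if x = x₀ ∧ b ≠ b₀ then 0 else P x b
  have hQ : ∀ f : X → β, ∏ x, Q x (f x) = if f x₀ = b₀ then ∏ x, P x (f x) else 0 := by
    intro f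
    split_ifs with hf
    · exact Finset.prod_congr rfl fun x _ => if_neg fun h : x = x₀ ∧ f x ≠ b₀ => h.2 (h.1 ▸ hf)
    · exact prod_eq_zero (mem_univ x₀) (if_pos ⟨rfl, hf⟩)
  calc ∑ f : X → β, (if f x₀ = b₀ then ∏ x, P x (f x) else 0)
      = ∏ x, ∑ b, Q x b := by simp only [← hQ, Fintype.prod_sum]
    _ = ∑ b, Q x₀ b := Fintype.prod_eq_single x₀ fun x hx => by simp [Q, hx, hP]
    _ = P x₀ b₀ := by simp [Q]

theorem Pi.mem_extremePoints_Icc {ι : Type*} {E : ι → Type*} [∀ i, AddCommGroup (E i)]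
    [∀ i, Module ℝ (E i)] [∀ i, Preorder (E i)] {a b p : ∀ i, E i}
    (h : ∀ i, p i ∈ (Set.Icc (a i) (b i)).extremePoints ℝ) :
    p ∈ (Set.Icc a b).extremePoints ℝ := by
  rw [← pi_univ_Icc, extremePoints_pi]
  exact fun i _ => h i

theorem extremePoints_convexHull_eq_of_subset_extremePoints {E : Type*} [AddCommGroup E]
    [Module ℝ E] {C D : Set E} (hC : Convex ℝ C) (hD : D ⊆ C.extremePoints ℝ) :
    (convexHull ℝ D).extremePoints ℝ = D :=
  extremePoints_convexHull_subset.antisymm fun _ hd =>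
    inter_extremePoints_subset_extremePoints_of_subset
      (convexHull_min (hD.trans extremePoints_subset) hC) ⟨subset_convexHull ℝ D hd, hD hd⟩

theorem Fin.two_exists_affine (f : Fin 2 → Fin 2) : ∃ μ α : Fin 2, f = (μ * · + α) := by
  revert f
  decide

theorem Fin.two_affine_injective :
    Function.Injective fun t : Fin 2 × Fin 2 => (t.1 * · + t.2 : Fin 2 → Fin 2) := by
  decide

abbrev Behaviour (α β X Y : Type*) := α → β → X → Y → ℝ

namespace Behaviour

variable {α β X Y : Type*}

def swap : Behaviour α β X Y →ₗ[ℝ] Behaviour β α Y X where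
  toFun p b a y x := p a b x y
  map_add' _ _ := rfl
  map_smul' _ _ := rfl

@[simp]
theorem swap_apply (p : Behaviour α β X Y) (a : α) (b : β) (x : X) (y : Y) :
    swap p b a y x = p a b x y := rfl

section Fintype

variable [Fintype α] [Fintype β]

variable (α β X Y) in
def classicalPolytope : Set (Behaviour α β X Y) :=
  {p | ∃ (q : ℝ) (p₁ : α → ℝ) (p₂ : β → α → X → ℝ) (p₃ : α → β → Y → ℝ) (p₄ : β → ℝ),
    0 ≤ q ∧ q ≤ 1 ∧
    (∀ a, 0 ≤ p₁ a) ∧ (∑ a, p₁ a = 1) ∧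
    (∀ b a x, 0 ≤ p₂ b a x) ∧ (∀ a x, ∑ b, p₂ b a x = 1) ∧
    (∀ a b y, 0 ≤ p₃ a b y) ∧ (∀ b y, ∑ a, p₃ a b y = 1) ∧
    (∀ b, 0 ≤ p₄ b) ∧ (∑ b, p₄ b = 1) ∧
    (∀ a b x y, p a b x y = q * p₁ a * p₂ b a x + (1 - q) * p₃ a b y * p₄ b)}

variable (α β X Y) in
def oneWayAB : Set (Behaviour α β X Y) :=
  {p | ∃ p₁ ∈ stdSimplex ℝ α, ∃ p₂ : β → α → X → ℝ, (∀ a x, (p₂ · a x) ∈ stdSimplex ℝ β) ∧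
    ∀ a b x y, p a b x y = p₁ a * p₂ b a x}

variable (α β X Y) in
def oneWayBA : Set (Behaviour α β X Y) :=
  {p | ∃ p₄ ∈ stdSimplex ℝ β, ∃ p₃ : α → β → Y → ℝ, (∀ b y, (p₃ · b y) ∈ stdSimplex ℝ α) ∧
    ∀ a b x y, p a b x y = p₄ b * p₃ a b y}

theorem classicalPolytope_eq_convexJoin :
    classicalPolytope α β X Y = convexJoin ℝ (oneWayAB α β X Y) (oneWayBA α β X Y) := by
  ext p
  simp only [mem_convexJoin, segment, classicalPolytope, oneWayAB, oneWayBA, mem_ofPred_eq]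
  constructor
  · rintro ⟨q, p₁, p₂, p₃, p₄, hq₀, hq₁, h₁, hs₁, h₂, hs₂, h₃, hs₃, h₄, hs₄, hp⟩
    refine ⟨_, ⟨p₁, ⟨h₁, hs₁⟩, p₂, fun a x => ⟨fun b => h₂ b a x, hs₂ a x⟩, fun _ _ _ _ => rfl⟩,
      _, ⟨p₄, ⟨h₄, hs₄⟩, p₃, fun b y => ⟨fun a => h₃ a b y, hs₃ b y⟩, fun _ _ _ _ => rfl⟩,
      q, 1 - q, hq₀, sub_nonneg.2 hq₁, add_sub_cancel q 1, ?_⟩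
    ext a b x y
    simp only [Pi.add_apply, Pi.smul_apply, smul_eq_mul, hp]
    ring
  · rintro ⟨u, ⟨p₁, ⟨h₁, hs₁⟩, p₂, hp₂, hu⟩, v, ⟨p₄, ⟨h₄, hs₄⟩, p₃, hp₃, hv⟩,
      c, d, hc, hd, hcd, rfl⟩
    obtain rfl : d = 1 - c := eq_sub_of_add_eq' hcd
    refine ⟨c, p₁, p₂, p₃, p₄, hc, sub_nonneg.1 hd, h₁, hs₁, fun b a x => (hp₂ a x).1 b,
      fun a x => (hp₂ a x).2, fun a b y => (hp₃ b y).1 a, fun b y => (hp₃ b y).2, h₄, hs₄,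
      fun a b x y => ?_⟩
    simp only [Pi.add_apply, Pi.smul_apply, smul_eq_mul, hu, hv]
    ring

theorem convex_oneWayAB [Nonempty β] : Convex ℝ (oneWayAB α β X Y) := by
  rintro _ ⟨p₁, hp₁, p₂, hp₂, hp⟩ _ ⟨p₁', hp₁', p₂', hp₂', hp'⟩ c d hc hd hcd
  have hmix : ∀ a x, ∃ r ∈ stdSimplex ℝ β, ∀ b, c * (p₁ a * p₂ b a x) + d * (p₁' a * p₂' b a x)
      = (c * p₁ a + d * p₁' a) * r b := by
    intro a x
    obtain ⟨r, hr, hfr⟩ := exists_mem_stdSimplex_mul_eq (f := fun b =>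
      c * (p₁ a * p₂ b a x) + d * (p₁' a * p₂' b a x)) fun b => by
        have := hp₁.1 a; have := hp₁'.1 a; have := (hp₂ a x).1 b; have := (hp₂' a x).1 b
        positivity
    refine ⟨r, hr, fun b => (hfr b).trans ?_⟩
    simp only [sum_add_distrib, ← mul_sum, (hp₂ a x).2, (hp₂' a x).2, mul_one]
  choose r hr hpr using hmix
  refine ⟨c • p₁ + d • p₁', convex_stdSimplex ℝ α hp₁ hp₁' hc hd hcd, fun b a x => r a x b, hr,
    fun a b x y => ?_⟩
  simp only [Pi.add_apply, Pi.smul_apply, smul_eq_mul, hp, hp', hpr]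

theorem image_swap_oneWayAB : swap '' oneWayAB β α Y X = oneWayBA α β X Y := by
  ext p
  constructor
  · rintro ⟨q, ⟨p₁, hp₁, p₂, hp₂, hq⟩, rfl⟩
    exact ⟨p₁, hp₁, p₂, hp₂, fun a b x y => hq b a y x⟩
  · rintro ⟨p₄, hp₄, p₃, hp₃, hp⟩
    exact ⟨swap p, ⟨p₄, hp₄, p₃, hp₃, fun b a y x => hp a b x y⟩, rfl⟩

end Fintype

section DecidableEq

variable [DecidableEq α] [DecidableEq β]

def deterministic (g : Y → α) (f : X → β) : Behaviour α β X Y :=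
  fun a b x y => if a = g y ∧ b = f x then 1 else 0

variable (α β X Y) in
def deterministicAB : Set (Behaviour α β X Y) :=
  range fun af : α × (X → β) => deterministic (Function.const Y af.1) af.2

variable (α β X Y) in
def deterministicBA : Set (Behaviour α β X Y) :=
  range fun gb : (Y → α) × β => deterministic gb.1 (Function.const X gb.2)

theorem swap_deterministic (g : X → β) (f : Y → α) :
    swap (deterministic g f) = deterministic f g := by
  ext a b x y
  simp [deterministic, and_comm]

theorem image_swap_deterministicAB : swap '' deterministicAB β α Y X = deterministicBA α β X Y := by
  refine Set.Subset.antisymm ?_ ?_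
  · rintro _ ⟨_, ⟨⟨b₀, g⟩, rfl⟩, rfl⟩
    exact ⟨(g, b₀), (swap_deterministic _ _).symm⟩
  · rintro _ ⟨⟨g, b₀⟩, rfl⟩
    exact ⟨_, ⟨(b₀, g), rfl⟩, swap_deterministic _ _⟩

theorem deterministic_mem_extremePoints_Icc (g : Y → α) (f : X → β) :
    deterministic g f ∈ (Set.Icc 0 1).extremePoints ℝ :=
  Pi.mem_extremePoints_Icc fun a => Pi.mem_extremePoints_Icc fun b =>
    Pi.mem_extremePoints_Icc fun x => Pi.mem_extremePoints_Icc fun y => by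
      change deterministic g f a b x y ∈ (Set.Icc (0 : ℝ) 1).extremePoints ℝ
      rw [extremePoints_Icc zero_le_one, deterministic]
      split_ifs <;> simp

theorem deterministic_injective [Nonempty X] [Nonempty Y] :
    Function.Injective fun gf : (Y → α) × (X → β) => deterministic gf.1 gf.2 := by
  rintro ⟨g, f⟩ ⟨g', f'⟩ h
  have key : ∀ x y, g y = g' y ∧ f x = f' x := fun x y => by
    simpa [deterministic] using congr_fun (congr_fun (congr_fun (congr_fun h (g y)) (f x)) x) y
  exact Prod.ext (funext fun y => (key (Classical.arbitrary X) y).1)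
    (funext fun x => (key x (Classical.arbitrary Y)).2)

end DecidableEq

section Polytope

variable [Fintype α] [Fintype β] [DecidableEq α] [DecidableEq β]

theorem deterministicAB_subset_oneWayAB : deterministicAB α β X Y ⊆ oneWayAB α β X Y := by
  rintro _ ⟨⟨a₀, f⟩, rfl⟩
  refine ⟨Pi.single a₀ 1, single_mem_stdSimplex ℝ a₀, fun b _ x => (Pi.single (f x) 1 : β → ℝ) b,
    fun _ x => single_mem_stdSimplex ℝ (f x), fun a b x y => ?_⟩
  by_cases ha : a = a₀ <;> by_cases hb : b = f x <;> simp [deterministic, ha, hb]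

theorem oneWayAB_subset_convexHull [Fintype X] [DecidableEq X] :
    oneWayAB α β X Y ⊆ convexHull ℝ (deterministicAB α β X Y) := by
  rintro p ⟨p₁, hp₁, p₂, hp₂, hp⟩
  -- Bob's response `f : X → β` is drawn with law `∏ x, p₂ (f x) a x`, independently for each `x`.
  let w : α × (X → β) → ℝ := fun af => p₁ af.1 * ∏ x, p₂ (af.2 x) af.1 x
  have hw : ∀ a : α, ∑ f : X → β, ∏ x, p₂ (f x) a x = 1 := fun a => by
    rw [← (Fintype.prod_sum fun x b => p₂ b a x)]
    exact prod_eq_one fun x _ => (hp₂ a x).2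
  have hp_eq : p = ∑ af, w af • deterministic (Function.const Y af.1) af.2 := by
    ext a b x y
    simp only [hp, Finset.sum_apply, Pi.smul_apply, smul_eq_mul, Fintype.sum_prod_type]
    rw [Fintype.sum_eq_single a fun a' ha' => sum_eq_zero fun f _ => by
      simp [deterministic, Ne.symm ha'], ← Fintype.sum_ite_eval_prod_eq (fun x => (hp₂ a x).2),
      mul_sum]
    refine Fintype.sum_congr _ _ fun f => ?_
    simp [deterministic, w, eq_comm]
  rw [hp_eq]
  refine (convex_convexHull ℝ _).sum_mem (fun af _ => ?_) ?_ fun af _ =>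
    subset_convexHull ℝ _ ⟨af, rfl⟩
  · exact mul_nonneg (hp₁.1 _) (prod_nonneg fun x _ => (hp₂ _ x).1 _)
  · simp only [w, Fintype.sum_prod_type, ← mul_sum, hw, mul_one, hp₁.2]

theorem oneWayAB_eq_convexHull [Nonempty β] [Fintype X] [DecidableEq X] :
    oneWayAB α β X Y = convexHull ℝ (deterministicAB α β X Y) :=
  oneWayAB_subset_convexHull.antisymm
    (convexHull_min deterministicAB_subset_oneWayAB convex_oneWayAB)

theorem oneWayBA_eq_convexHull [Nonempty α] [Fintype Y] [DecidableEq Y] :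
    oneWayBA α β X Y = convexHull ℝ (deterministicBA α β X Y) := by
  rw [← image_swap_oneWayAB, oneWayAB_eq_convexHull, LinearMap.image_convexHull,
    image_swap_deterministicAB]

variable [Nonempty α] [Nonempty β] [Fintype X] [DecidableEq X] [Fintype Y] [DecidableEq Y]

theorem classicalPolytope_eq_convexHull :
    classicalPolytope α β X Y =
      convexHull ℝ (deterministicAB α β X Y ∪ deterministicBA α β X Y) := by
  rw [classicalPolytope_eq_convexJoin, oneWayAB_eq_convexHull, oneWayBA_eq_convexHull]
  exact (convexHull_union (range_nonempty _) (range_nonempty _)).symm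

theorem extremePoints_classicalPolytope :
    (classicalPolytope α β X Y).extremePoints ℝ =
      deterministicAB α β X Y ∪ deterministicBA α β X Y := by
  rw [classicalPolytope_eq_convexHull]
  refine extremePoints_convexHull_eq_of_subset_extremePoints (convex_Icc 0 1) ?_
  rintro _ (⟨_, rfl⟩ | ⟨_, rfl⟩) <;> exact deterministic_mem_extremePoints_Icc _ _

end Polytope

def binaryDeterministic : Set (Behaviour (Fin 2) (Fin 2) (Fin 2) (Fin 2)) :=
  {p | ∃ α β μ ν : Fin 2, ¬(μ = 1 ∧ ν = 1) ∧ p = deterministic (μ * · + α) (ν * · + β)}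

theorem binaryDeterministic_eq :
    binaryDeterministic = deterministicAB (Fin 2) (Fin 2) (Fin 2) (Fin 2) ∪
      deterministicBA (Fin 2) (Fin 2) (Fin 2) (Fin 2) := by
  refine Set.Subset.antisymm ?_ ?_
  · rintro _ ⟨α, β, μ, ν, hμν, rfl⟩
    rcases not_and_or.1 hμν with hμ | hν
    · obtain rfl : μ = 0 := by omega
      exact Or.inl ⟨(α, (ν * · + β)), by simp [Function.const_def]⟩
    · obtain rfl : ν = 0 := by omega
      exact Or.inr ⟨((μ * · + α), β), by simp [Function.const_def]⟩
  · rintro _ (⟨⟨α, f⟩, rfl⟩ | ⟨⟨g, β⟩, rfl⟩)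
    · obtain ⟨ν, β, rfl⟩ := Fin.two_exists_affine f
      exact ⟨α, β, 0, ν, by simp, by simp [Function.const_def]⟩
    · obtain ⟨μ, α, rfl⟩ := Fin.two_exists_affine g
      exact ⟨α, β, μ, 0, by simp, by simp [Function.const_def]⟩

theorem ncard_binaryDeterministic : binaryDeterministic.ncard = 12 := by
  set F := fun t : (Fin 2 × Fin 2) × (Fin 2 × Fin 2) =>
    deterministic (t.1.1 * · + t.1.2) (t.2.1 * · + t.2.2)
  have hF : Function.Injective F :=
    deterministic_injective.comp (Fin.two_affine_injective.prodMap Fin.two_affine_injective)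
  have himage : binaryDeterministic = F '' {t | ¬(t.1.1 = 1 ∧ t.2.1 = 1)} := by
    refine Set.Subset.antisymm ?_ ?_
    · rintro _ ⟨α, β, μ, ν, hμν, rfl⟩
      exact ⟨((μ, α), (ν, β)), hμν, rfl⟩
    · rintro _ ⟨⟨⟨μ, α⟩, ν, β⟩, hμν, rfl⟩
      exact ⟨α, β, μ, ν, hμν, rfl⟩
  rw [himage, ncard_image_of_injective _ hF, ncard_eq_toFinset_card']
  rfl

end Behaviour

/-- The extreme points of the binary classical polytope are exactly
the 12 deterministic behaviours `p(a,b|x,y) = 1` iff `a = μ·y ⊕ α`, `b = ν·x ⊕ β`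
with `μ`, `ν` not both `1`. (Here `Fin 2` arithmetic is mod 2.) -/
theorem extremePoints_binary_classical_polytope :
    ({p : Fin 2 → Fin 2 → Fin 2 → Fin 2 → ℝ |
        ∃ (q : ℝ) (p₁ : Fin 2 → ℝ) (p₂ : Fin 2 → Fin 2 → Fin 2 → ℝ)
          (p₃ : Fin 2 → Fin 2 → Fin 2 → ℝ) (p₄ : Fin 2 → ℝ),
          0 ≤ q ∧ q ≤ 1 ∧
          (∀ a, 0 ≤ p₁ a) ∧ (∑ a, p₁ a = 1) ∧
          (∀ b a x, 0 ≤ p₂ b a x) ∧ (∀ a x, ∑ b, p₂ b a x = 1) ∧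
          (∀ a b y, 0 ≤ p₃ a b y) ∧ (∀ b y, ∑ a, p₃ a b y = 1) ∧
          (∀ b, 0 ≤ p₄ b) ∧ (∑ b, p₄ b = 1) ∧
          (∀ a b x y,
            p a b x y = q * p₁ a * p₂ b a x + (1 - q) * p₃ a b y * p₄ b)
      }.extremePoints ℝ
      =
      {p : Fin 2 → Fin 2 → Fin 2 → Fin 2 → ℝ |
        ∃ α β μ ν : Fin 2, ¬(μ = 1 ∧ ν = 1) ∧ p = fun a b x y =>
          if a = μ * y + α ∧ b = ν * x + β then (1 : ℝ) else 0})
    ∧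
    ({p : Fin 2 → Fin 2 → Fin 2 → Fin 2 → ℝ |
        ∃ α β μ ν : Fin 2, ¬(μ = 1 ∧ ν = 1) ∧ p = fun a b x y =>
          if a = μ * y + α ∧ b = ν * x + β then (1 : ℝ) else 0}).ncard = 12 :=
  ⟨Behaviour.extremePoints_classicalPolytope.trans Behaviour.binaryDeterministic_eq.symm,
    Behaviour.ncard_binaryDeterministic⟩
end

section
/- The binary classical polytope is 7-dimensional: the affine span of the set of classical binary two-party behaviours, regarded as a subset of ℝ^16, has dimension 7. In particular it is a proper lower-dimensional subset of the 8-dimensional binary NBTS polytope. -/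
namespace BinClassical

abbrev Beh := Fin 2 → Fin 2 → Fin 2 → Fin 2 → ℝ

/-- Evaluation at a coordinate, as a linear map. -/
def ev (a b x y : Fin 2) : Beh →ₗ[ℝ] ℝ where
  toFun p := p a b x y
  map_add' _ _ := rfl
  map_smul' _ _ := rfl

@[simp] lemma ev_apply (a b x y : Fin 2) (p : Beh) : ev a b x y p = p a b x y := rfl

def Lrow : Fin 9 → (Beh →ₗ[ℝ] ℝ)
  | 0 => ev 0 0 0 0 + ev 0 1 0 0 + ev 1 0 0 0 + ev 1 1 0 0
  | 1 => ev 0 0 0 1 + ev 0 1 0 1 + ev 1 0 0 1 + ev 1 1 0 1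
  | 2 => ev 0 0 1 0 + ev 0 1 1 0 + ev 1 0 1 0 + ev 1 1 1 0
  | 3 => ev 0 0 1 1 + ev 0 1 1 1 + ev 1 0 1 1 + ev 1 1 1 1
  | 4 => (ev 0 0 0 0 + ev 0 1 0 0) - (ev 0 0 1 0 + ev 0 1 1 0)
  | 5 => (ev 0 0 0 1 + ev 0 1 0 1) - (ev 0 0 1 1 + ev 0 1 1 1)
  | 6 => (ev 0 0 0 0 + ev 1 0 0 0) - (ev 0 0 0 1 + ev 1 0 0 1)
  | 7 => (ev 0 0 1 0 + ev 1 0 1 0) - (ev 0 0 1 1 + ev 1 0 1 1)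
  | 8 => ev 0 0 0 0 - ev 0 0 0 1 - ev 0 0 1 0 + ev 0 0 1 1

/-- The linear map of the 9 affine constraints. -/
noncomputable def L : Beh →ₗ[ℝ] (Fin 9 → ℝ) := LinearMap.pi Lrow

lemma L_surj : Function.Surjective L := by
  intro c
  refine ⟨![![![![c 8, 0], ![0, 0]],
             ![![c 4 - c 8, c 5], ![0, 0]]],
           ![![![c 6 - c 8, 0], ![c 7, 0]],
             ![![c 0 - c 4 - c 6 + c 8, c 1 - c 5], ![c 2 - c 7, c 3]]]], ?_⟩
  funext i
  fin_cases i <;>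
    simp [L, Lrow, LinearMap.pi_apply, LinearMap.add_apply, LinearMap.sub_apply] <;>
    ring



def Cl : Set Beh :=
  {p : Fin 2 → Fin 2 → Fin 2 → Fin 2 → ℝ |
    ∃ (q : ℝ) (p₁ : Fin 2 → ℝ) (p₂ : Fin 2 → Fin 2 → Fin 2 → ℝ)
      (p₃ : Fin 2 → Fin 2 → Fin 2 → ℝ) (p₄ : Fin 2 → ℝ),
      0 ≤ q ∧ q ≤ 1 ∧
      (∀ a, 0 ≤ p₁ a) ∧ (∑ a, p₁ a = 1) ∧
      (∀ b a x, 0 ≤ p₂ b a x) ∧ (∀ a x, ∑ b, p₂ b a x = 1) ∧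
      (∀ a b y, 0 ≤ p₃ a b y) ∧ (∀ b y, ∑ a, p₃ a b y = 1) ∧
      (∀ b, 0 ≤ p₄ b) ∧ (∑ b, p₄ b = 1) ∧
      (∀ a b x y,
        p a b x y = q * p₁ a * p₂ b a x + (1 - q) * p₃ a b y * p₄ b)}

def Lconst : Fin 9 → ℝ
  | 0 => 1 | 1 => 1 | 2 => 1 | 3 => 1
  | 4 => 0 | 5 => 0 | 6 => 0 | 7 => 0 | 8 => 0

lemma L_mem {p : Beh} (hp : p ∈ Cl) : L p = Lconst := by
  obtain ⟨q, p₁, p₂, p₃, p₄, _, _, _, h1, _, h2, _, h3, _, h4, hp⟩ := hp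
  rw [Fin.sum_univ_two] at h1 h4
  have h2' : ∀ a x, p₂ 0 a x + p₂ 1 a x = 1 := fun a x => by
    have := h2 a x; rwa [Fin.sum_univ_two] at this
  have h3' : ∀ b y, p₃ 0 b y + p₃ 1 b y = 1 := fun b y => by
    have := h3 b y; rwa [Fin.sum_univ_two] at this
  funext i
  fin_cases i <;>
    simp only [L, Lrow, LinearMap.pi_apply, LinearMap.add_apply, LinearMap.sub_apply,
      ev_apply, Matrix.cons_val_zero, Matrix.cons_val_one, Matrix.head_cons,
      Matrix.cons_val_succ, Lconst] <;>
    simp only [hp]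
  · linear_combination (q * p₁ 0) * h2' 0 0 + (q * p₁ 1) * h2' 1 0 +
      ((1-q) * p₄ 0) * h3' 0 0 + ((1-q) * p₄ 1) * h3' 1 0 + q * h1 + (1-q) * h4
  · linear_combination (q * p₁ 0) * h2' 0 0 + (q * p₁ 1) * h2' 1 0 +
      ((1-q) * p₄ 0) * h3' 0 1 + ((1-q) * p₄ 1) * h3' 1 1 + q * h1 + (1-q) * h4
  · linear_combination (q * p₁ 0) * h2' 0 1 + (q * p₁ 1) * h2' 1 1 +
      ((1-q) * p₄ 0) * h3' 0 0 + ((1-q) * p₄ 1) * h3' 1 0 + q * h1 + (1-q) * h4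
  · linear_combination (q * p₁ 0) * h2' 0 1 + (q * p₁ 1) * h2' 1 1 +
      ((1-q) * p₄ 0) * h3' 0 1 + ((1-q) * p₄ 1) * h3' 1 1 + q * h1 + (1-q) * h4
  · linear_combination (q * p₁ 0) * h2' 0 0 - (q * p₁ 0) * h2' 0 1
  · linear_combination (q * p₁ 0) * h2' 0 0 - (q * p₁ 0) * h2' 0 1
  · linear_combination ((1-q) * p₄ 0) * h3' 0 0 - ((1-q) * p₄ 0) * h3' 0 1
  · linear_combination ((1-q) * p₄ 0) * h3' 0 0 - ((1-q) * p₄ 0) * h3' 0 1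
  · ring

lemma direction_le_ker : (affineSpan ℝ Cl).direction ≤ LinearMap.ker L := by
  rw [direction_affineSpan, vectorSpan_def]
  rw [Submodule.span_le]
  rintro v ⟨p, hp, p', hp', rfl⟩
  simp only [SetLike.mem_coe, LinearMap.mem_ker, vsub_eq_sub, map_sub,
    L_mem hp, L_mem hp', sub_self]

lemma finrank_beh : Module.finrank ℝ Beh = 16 := by
  simp [Module.finrank_pi_fintype, Fin.sum_univ_two]

lemma finrank_ker : Module.finrank ℝ (LinearMap.ker L) = 7 := by
  have h := LinearMap.finrank_range_add_finrank_ker L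
  rw [LinearMap.range_eq_top.mpr L_surj, finrank_top, finrank_beh] at h
  simp only [Module.finrank_fintype_fun_eq_card, Fintype.card_fin] at h
  omega

/-- Projection onto 7 chart coordinates. -/
def Trow : Fin 7 → (Beh →ₗ[ℝ] ℝ)
  | 0 => ev 0 0 0 0
  | 1 => ev 0 0 0 1
  | 2 => ev 0 0 1 0
  | 3 => ev 0 1 0 0
  | 4 => ev 0 1 0 1
  | 5 => ev 1 0 0 0
  | 6 => ev 1 0 1 0

noncomputable def T : Beh →ₗ[ℝ] (Fin 7 → ℝ) := LinearMap.pi Trow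

/-- The uniform behaviour. -/
noncomputable def P0 : Beh := fun _ _ _ _ => 1/4

/-- "Alice spikes at (a₀,x₀)" classical behaviours. -/
noncomputable def bA (a₀ x₀ : Fin 2) : Beh := fun a b x _ =>
  (1/2) * (if a = a₀ ∧ x = x₀ then (if b = 0 then 1 else 0) else 1/2)

/-- "Bob spikes at (b₀,y₀)" classical behaviours. -/
noncomputable def bB (b₀ y₀ : Fin 2) : Beh := fun a b _ y =>
  (1/2) * (if b = b₀ ∧ y = y₀ then (if a = 0 then 1 else 0) else 1/2)

lemma P0_mem : P0 ∈ Cl := by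
  exact ⟨1, fun _ => 1/2, fun _ _ _ => 1/2, fun _ _ _ => 1/2, fun _ => 1/2,
    by norm_num, by norm_num, fun _ => by norm_num,
    by norm_num [Fin.sum_univ_two], fun _ _ _ => by norm_num,
    fun _ _ => by norm_num [Fin.sum_univ_two], fun _ _ _ => by norm_num,
    fun _ _ => by norm_num [Fin.sum_univ_two], fun _ => by norm_num,
    by norm_num [Fin.sum_univ_two], fun _ _ _ _ => by norm_num [P0]⟩

lemma bA_mem (a₀ x₀ : Fin 2) : bA a₀ x₀ ∈ Cl := by
  refine ⟨1, fun _ => 1/2,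
    fun b a x => if a = a₀ ∧ x = x₀ then (if b = 0 then 1 else 0) else 1/2,
    fun _ _ _ => 1/2, fun _ => 1/2,
    by norm_num, by norm_num, fun _ => by norm_num,
    by norm_num [Fin.sum_univ_two], ?_, ?_, fun _ _ _ => by norm_num,
    fun _ _ => by norm_num [Fin.sum_univ_two], fun _ => by norm_num,
    by norm_num [Fin.sum_univ_two], ?_⟩
  · intro b a x; dsimp only; split_ifs <;> norm_num
  · intro a x
    rw [Fin.sum_univ_two]; dsimp only
    split_ifs <;> simp_all <;> norm_num
  · intro a b x y; simp only [bA]; ring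

lemma bB_mem (b₀ y₀ : Fin 2) : bB b₀ y₀ ∈ Cl := by
  refine ⟨0, fun _ => 1/2, fun _ _ _ => 1/2,
    fun a b y => if b = b₀ ∧ y = y₀ then (if a = 0 then 1 else 0) else 1/2,
    fun _ => 1/2,
    by norm_num, by norm_num, fun _ => by norm_num,
    by norm_num [Fin.sum_univ_two], fun _ _ _ => by norm_num,
    fun _ _ => by norm_num [Fin.sum_univ_two], ?_, ?_, fun _ => by norm_num,
    by norm_num [Fin.sum_univ_two], ?_⟩
  · intro a b y; dsimp only; split_ifs <;> norm_num
  · intro b y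
    rw [Fin.sum_univ_two]; dsimp only
    split_ifs <;> simp_all <;> norm_num
  · intro a b x y; simp only [bB]; ring

lemma mem_direction_A (a₀ x₀ : Fin 2) :
    bA a₀ x₀ - P0 ∈ (affineSpan ℝ Cl).direction := by
  rw [direction_affineSpan]
  exact vsub_mem_vectorSpan ℝ (bA_mem a₀ x₀) P0_mem

lemma mem_direction_B (b₀ y₀ : Fin 2) :
    bB b₀ y₀ - P0 ∈ (affineSpan ℝ Cl).direction := by
  rw [direction_affineSpan]
  exact vsub_mem_vectorSpan ℝ (bB_mem b₀ y₀) P0_mem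

lemma map_T_top : ((affineSpan ℝ Cl).direction).map T = ⊤ := by
  set M := ((affineSpan ℝ Cl).direction).map T with hM
  rw [eq_top_iff]
  have hsingle : ∀ i : Fin 7, (fun j => if i = j then (1:ℝ) else 0) ∈ M := by
    intro i
    fin_cases i
    · refine ⟨(4:ℝ) • (bA 0 0 - P0) - (4:ℝ) • (bB 0 1 - P0) + (4:ℝ) • (bB 1 0 - P0)
          + (4:ℝ) • (bB 1 1 - P0), ?_, ?_⟩
      · exact Submodule.add_mem _ (Submodule.add_mem _
          (Submodule.sub_mem _
            (Submodule.smul_mem _ _ (mem_direction_A 0 0))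
            (Submodule.smul_mem _ _ (mem_direction_B 0 1)))
          (Submodule.smul_mem _ _ (mem_direction_B 1 0)))
          (Submodule.smul_mem _ _ (mem_direction_B 1 1))
      · funext j; fin_cases j <;>
          simp [T, Trow, bA, bB, P0] <;> norm_num
    · refine ⟨(4:ℝ) • (bB 0 1 - P0), Submodule.smul_mem _ _ (mem_direction_B 0 1), ?_⟩
      funext j; fin_cases j <;> simp [T, Trow, bB, P0] <;> norm_num
    · refine ⟨(4:ℝ) • (bA 0 1 - P0), Submodule.smul_mem _ _ (mem_direction_A 0 1), ?_⟩
      funext j; fin_cases j <;> simp [T, Trow, bA, P0] <;> norm_num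
    · refine ⟨(4:ℝ) • (bB 1 0 - P0), Submodule.smul_mem _ _ (mem_direction_B 1 0), ?_⟩
      funext j; fin_cases j <;> simp [T, Trow, bB, P0] <;> norm_num
    · refine ⟨(4:ℝ) • (bB 1 1 - P0), Submodule.smul_mem _ _ (mem_direction_B 1 1), ?_⟩
      funext j; fin_cases j <;> simp [T, Trow, bB, P0] <;> norm_num
    · refine ⟨(4:ℝ) • (bA 1 0 - P0), Submodule.smul_mem _ _ (mem_direction_A 1 0), ?_⟩
      funext j; fin_cases j <;> simp [T, Trow, bA, P0] <;> norm_num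
    · refine ⟨(4:ℝ) • (bA 1 1 - P0), Submodule.smul_mem _ _ (mem_direction_A 1 1), ?_⟩
      funext j; fin_cases j <;> simp [T, Trow, bA, P0] <;> norm_num
  intro c _
  rw [pi_eq_sum_univ c]
  exact Submodule.sum_mem _ (fun i _ => Submodule.smul_mem _ _ (hsingle i))

lemma finrank_direction : Module.finrank ℝ ((affineSpan ℝ Cl).direction) = 7 := by
  refine le_antisymm ?_ ?_
  · calc Module.finrank ℝ ((affineSpan ℝ Cl).direction)
        ≤ Module.finrank ℝ (LinearMap.ker L) := Submodule.finrank_mono direction_le_ker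
      _ = 7 := finrank_ker
  · calc (7 : ℕ)
        = Module.finrank ℝ (((affineSpan ℝ Cl).direction).map T) := by
          rw [map_T_top, finrank_top, Module.finrank_fintype_fun_eq_card, Fintype.card_fin]
      _ ≤ Module.finrank ℝ ((affineSpan ℝ Cl).direction) :=
          Submodule.finrank_map_le T _

def NS : Set Beh :=
  {p : Fin 2 → Fin 2 → Fin 2 → Fin 2 → ℝ |
    (∀ a b x y, 0 ≤ p a b x y) ∧
    (∀ x y, ∑ a, ∑ b, p a b x y = 1) ∧
    (∀ a x x' y, ∑ b, p a b x y = ∑ b, p a b x' y) ∧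
    (∀ b x y y', ∑ a, p a b x y = ∑ a, p a b x y')}

lemma Cl_subset_NS : Cl ⊆ NS := by
  rintro p ⟨q, p₁, p₂, p₃, p₄, hq0, hq1, h1n, h1, h2n, h2, h3n, h3, h4n, h4, hp⟩
  rw [Fin.sum_univ_two] at h1 h4
  have h2' : ∀ a x, p₂ 0 a x + p₂ 1 a x = 1 := fun a x => by
    have := h2 a x; rwa [Fin.sum_univ_two] at this
  have h3' : ∀ b y, p₃ 0 b y + p₃ 1 b y = 1 := fun b y => by
    have := h3 b y; rwa [Fin.sum_univ_two] at this
  refine ⟨?_, ?_, ?_, ?_⟩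
  · intro a b x y
    rw [hp a b x y]
    have : (0:ℝ) ≤ 1 - q := by linarith
    exact add_nonneg
      (mul_nonneg (mul_nonneg hq0 (h1n a)) (h2n b a x))
      (mul_nonneg (mul_nonneg this (h3n a b y)) (h4n b))
  · intro x y
    simp only [Fin.sum_univ_two, hp]
    linear_combination (q * p₁ 0) * h2' 0 x + (q * p₁ 1) * h2' 1 x +
      ((1-q) * p₄ 0) * h3' 0 y + ((1-q) * p₄ 1) * h3' 1 y + q * h1 + (1-q) * h4
  · intro a x x' y
    simp only [Fin.sum_univ_two, hp]
    linear_combination (q * p₁ a) * h2' a x - (q * p₁ a) * h2' a x'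
  · intro b x y y'
    simp only [Fin.sum_univ_two, hp]
    linear_combination ((1-q) * p₄ b) * h3' b y - ((1-q) * p₄ b) * h3' b y'

/-- The PR box. -/
noncomputable def PR : Beh := fun a b x y =>
  if x = 1 ∧ y = 1 then (if a = b then 0 else 1/2) else (if a = b then 1/2 else 0)

lemma PR_mem_NS : PR ∈ NS := by
  refine ⟨?_, ?_, ?_, ?_⟩
  · intro a b x y
    unfold PR
    split_ifs <;> norm_num
  · intro x y
    fin_cases x <;> fin_cases y <;> simp [PR, Fin.sum_univ_two] <;> norm_num
  · intro a x x' y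
    fin_cases a <;> fin_cases x <;> fin_cases x' <;> fin_cases y <;>
      simp [PR, Fin.sum_univ_two] <;> norm_num
  · intro b x y y'
    fin_cases b <;> fin_cases x <;> fin_cases y <;> fin_cases y' <;>
      simp [PR, Fin.sum_univ_two] <;> norm_num

lemma PR_not_mem : PR ∉ Cl := by
  rintro ⟨q, p₁, p₂, p₃, p₄, -, -, -, -, -, -, -, -, -, -, hp⟩
  have e00 := hp 0 0 0 0
  have e01 := hp 0 0 0 1
  have e10 := hp 0 0 1 0
  have e11 := hp 0 0 1 1
  simp only [PR] at e00 e01 e10 e11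
  norm_num at e00 e01 e10 e11
  nlinarith [e00, e01, e10, e11]

end BinClassical



/-- The binary classical polytope is 7-dimensional: the affine span
of the set of classical binary behaviours (in `ℝ^16`) has dimension 7; in
particular, the classical polytope is a proper subset of the (8-dimensional)
binary NBTS polytope. -/
theorem binary_classical_polytope_dim_seven :
    Module.finrank ℝ
      (affineSpan ℝ
        {p : Fin 2 → Fin 2 → Fin 2 → Fin 2 → ℝ |
          ∃ (q : ℝ) (p₁ : Fin 2 → ℝ) (p₂ : Fin 2 → Fin 2 → Fin 2 → ℝ)
            (p₃ : Fin 2 → Fin 2 → Fin 2 → ℝ) (p₄ : Fin 2 → ℝ),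
            0 ≤ q ∧ q ≤ 1 ∧
            (∀ a, 0 ≤ p₁ a) ∧ (∑ a, p₁ a = 1) ∧
            (∀ b a x, 0 ≤ p₂ b a x) ∧ (∀ a x, ∑ b, p₂ b a x = 1) ∧
            (∀ a b y, 0 ≤ p₃ a b y) ∧ (∀ b y, ∑ a, p₃ a b y = 1) ∧
            (∀ b, 0 ≤ p₄ b) ∧ (∑ b, p₄ b = 1) ∧
            (∀ a b x y,
              p a b x y = q * p₁ a * p₂ b a x + (1 - q) * p₃ a b y * p₄ b)
        }).direction = 7
    ∧
    {p : Fin 2 → Fin 2 → Fin 2 → Fin 2 → ℝ |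
      ∃ (q : ℝ) (p₁ : Fin 2 → ℝ) (p₂ : Fin 2 → Fin 2 → Fin 2 → ℝ)
        (p₃ : Fin 2 → Fin 2 → Fin 2 → ℝ) (p₄ : Fin 2 → ℝ),
        0 ≤ q ∧ q ≤ 1 ∧
        (∀ a, 0 ≤ p₁ a) ∧ (∑ a, p₁ a = 1) ∧
        (∀ b a x, 0 ≤ p₂ b a x) ∧ (∀ a x, ∑ b, p₂ b a x = 1) ∧
        (∀ a b y, 0 ≤ p₃ a b y) ∧ (∀ b y, ∑ a, p₃ a b y = 1) ∧
        (∀ b, 0 ≤ p₄ b) ∧ (∑ b, p₄ b = 1) ∧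
        (∀ a b x y,
          p a b x y = q * p₁ a * p₂ b a x + (1 - q) * p₃ a b y * p₄ b)}
    ⊂
    {p : Fin 2 → Fin 2 → Fin 2 → Fin 2 → ℝ |
      (∀ a b x y, 0 ≤ p a b x y) ∧
      (∀ x y, ∑ a, ∑ b, p a b x y = 1) ∧
      (∀ a x x' y, ∑ b, p a b x y = ∑ b, p a b x' y) ∧
      (∀ b x y y', ∑ a, p a b x y = ∑ a, p a b x y')} := by
  constructor
  · exact BinClassical.finrank_direction
  · exact (Set.ssubset_iff_of_subset BinClassical.Cl_subset_NS).mpr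
      ⟨BinClassical.PR, BinClassical.PR_mem_NS, BinClassical.PR_not_mem⟩
end

section
/- Let each party have d outcomes and m inputs. A two-party behaviour p lies in the convex hull of the classical deterministic behaviours — i.e., the behaviours with p(a,b|x,y) = 1 iff a = α and b = β; or p(a,b|x,y) = 1 iff a = α and b = β_x; or p(a,b|x,y) = 1 iff a = α_y and b = β, where α, β ∈ Fin d, (β_x)_{x ∈ Fin m} and (α_y)_{y ∈ Fin m} are arbitrary families in Fin d — if and only if p satisfies positivity, normalisation, the NBTS conditions, and the classicality equalities p(a,b|x,y) + p(a,b|x',y') = p(a,b|x,y') + p(a,b|x',y) for all a,b,x,x',y,y'. -/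
/-!
The classicality equalities say that `p (a, b | ·, ·)` is additively separable, so subtracting its
minimum over `(x, y)` writes `p = c + f + g` with nonnegative `c (a, b)`, `f (a, b | x)` and
`g (a, b | y)`. The NBTS conditions then make `∑ b, f (a, b | x)` independent of `x` and
`∑ a, g (a, b | y)` independent of `y`. A nonnegative table whose rows all have sum `s` is `s`
times a mixture of deterministic tables: the product of its normalised rows is a distribution on
deterministic tables whose marginals are those rows. So `p` lies in the cone over the convex hull
of the deterministic behaviours, and normalisation puts it in the hull itself.
-/

open Finset Set
open scoped Pointwise

section Cone

variable {𝕜 E F : Type*} [Field 𝕜] [LinearOrder 𝕜] [AddCommGroup E] [Module 𝕜 E]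
  [AddCommGroup F] [Module 𝕜 F] {s : Set E}

lemma Convex.add_mem_Ici_smul [IsStrictOrderedRing 𝕜] (hs : Convex 𝕜 s) {x y : E}
    (hx : x ∈ Ici (0 : 𝕜) • s) (hy : y ∈ Ici (0 : 𝕜) • s) : x + y ∈ Ici (0 : 𝕜) • s := by
  obtain ⟨a, ha, u, hu, rfl⟩ := hx
  obtain ⟨b, hb, v, hv, rfl⟩ := hy
  obtain ⟨w, hw, hsum⟩ := hs.exists_mem_add_smul_eq hu hv ha hb
  exact ⟨a + b, add_nonneg ha hb, w, hw, hsum⟩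

lemma Convex.sum_mem_Ici_smul [IsStrictOrderedRing 𝕜] {ι : Type*} (hs : Convex 𝕜 s)
    (hne : s.Nonempty) {t : Finset ι} {f : ι → E} (hf : ∀ i ∈ t, f i ∈ Ici (0 : 𝕜) • s) :
    ∑ i ∈ t, f i ∈ Ici (0 : 𝕜) • s := by
  obtain ⟨z, hz⟩ := hne
  exact sum_induction f (· ∈ Ici (0 : 𝕜) • s) (fun _ _ => hs.add_mem_Ici_smul)
    ⟨0, le_rfl, z, hz, zero_smul 𝕜 z⟩ hf

lemma LinearMap.map_mem_Ici_smul_convexHull (L : E →ₗ[𝕜] F) {t : Set F} (hst : MapsTo L s t)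
    {x : E} (hx : x ∈ Ici (0 : 𝕜) • convexHull 𝕜 s) :
    L x ∈ Ici (0 : 𝕜) • convexHull 𝕜 t := by
  obtain ⟨a, ha, u, hu, rfl⟩ := hx
  refine ⟨a, ha, L u, convexHull_mono hst.image_subset ?_, (L.map_smul a u).symm⟩
  rw [← L.image_convexHull]
  exact mem_image_of_mem L hu

end Cone

section ProductMarginal

variable {ι κ : Type*} [Fintype ι] [DecidableEq ι] [Fintype κ] [DecidableEq κ]

lemma sum_prod_apply_mul_ite_eq {R : Type*} [CommSemiring R] (q : ι → κ → R)
    (hq : ∀ i, ∑ k, q i k = 1) (i : ι) (k : κ) :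
    ∑ B : ι → κ, (∏ j, q j (B j)) * (if k = B i then 1 else 0) = q i k := by
  calc ∑ B : ι → κ, (∏ j, q j (B j)) * (if k = B i then 1 else 0)
      = ∑ B : ι → κ, ∏ j, q j (B j) * (if j = i then (if k = B j then 1 else 0) else 1) := by
        refine sum_congr rfl fun B _ => ?_
        rw [prod_mul_distrib, Fintype.prod_ite_eq' i fun j => if k = B j then (1 : R) else 0]
    _ = ∏ j, ∑ c, q j c * (if j = i then (if k = c then 1 else 0) else 1) := by
        rw [Fintype.prod_sum]
    _ = ∏ j, if j = i then q i k else 1 := by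
        refine Fintype.prod_congr _ _ fun j => ?_
        split_ifs with hj
        · subst hj; simp
        · simp [hq j]
    _ = q i k := Fintype.prod_ite_eq' i _

lemma mem_convexHull_range_of_sum_eq_one {q : ι → κ → ℝ} (hq₀ : ∀ i k, 0 ≤ q i k)
    (hq₁ : ∀ i, ∑ k, q i k = 1) :
    q ∈ convexHull ℝ (range fun (B : ι → κ) i k => if k = B i then (1 : ℝ) else 0) := by
  have hq : q = ∑ B : ι → κ, (∏ j, q j (B j)) • fun i k => if k = B i then (1 : ℝ) else 0 := by
    funext i k
    simp only [Finset.sum_apply, Pi.smul_apply, smul_eq_mul]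
    exact (sum_prod_apply_mul_ite_eq q hq₁ i k).symm
  rw [hq]
  exact (convex_convexHull ℝ _).sum_mem (fun B _ => prod_nonneg fun j _ => hq₀ j (B j))
    (by rw [← Fintype.prod_sum]; simp [hq₁]) fun B _ => subset_convexHull ℝ _ ⟨B, rfl⟩

lemma mem_Ici_smul_convexHull_range_of_sum_eq [Nonempty ι] [Nonempty κ] {q : ι → κ → ℝ}
    (hq₀ : ∀ i k, 0 ≤ q i k) (hq : ∀ i i', ∑ k, q i k = ∑ k, q i' k) :
    q ∈ Ici (0 : ℝ) •
      convexHull ℝ (range fun (B : ι → κ) i k => if k = B i then (1 : ℝ) else 0) := by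
  obtain ⟨i₀⟩ := ‹Nonempty ι›
  set s := ∑ k, q i₀ k
  rcases (sum_nonneg fun k _ => hq₀ i₀ k : 0 ≤ s).eq_or_lt with hs | hs
  · have hzero : q = 0 := funext fun i => funext fun k =>
      (sum_eq_zero_iff_of_nonneg fun k _ => hq₀ i k).1 ((hq i i₀).trans hs.symm) k (mem_univ k)
    obtain ⟨B⟩ : Nonempty (ι → κ) := inferInstance
    refine ⟨0, self_mem_Ici, _, subset_convexHull ℝ _ ⟨B, rfl⟩, ?_⟩
    rw [hzero]
    exact zero_smul ℝ _
  · refine ⟨s, hs.le, s⁻¹ • q, mem_convexHull_range_of_sum_eq_one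
      (fun i k => mul_nonneg (inv_nonneg.2 hs.le) (hq₀ i k)) fun i => ?_,
      smul_inv_smul₀ hs.ne' q⟩
    simp only [Pi.smul_apply, smul_eq_mul, ← mul_sum, hq i i₀]
    exact inv_mul_cancel₀ hs.ne'

end ProductMarginal

lemma exists_eq_add_add_of_add_eq_add {X Y : Type*} [Finite X] [Finite Y] [Nonempty X]
    [Nonempty Y] {h : X → Y → ℝ} (h₀ : ∀ x y, 0 ≤ h x y)
    (hh : ∀ x x' y y', h x y + h x' y' = h x y' + h x' y) :
    ∃ c, 0 ≤ c ∧ ∃ (f : X → ℝ) (g : Y → ℝ), (∀ x, 0 ≤ f x) ∧ (∀ y, 0 ≤ g y) ∧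
      ∀ x y, h x y = c + f x + g y := by
  obtain ⟨⟨x₀, y₀⟩, hmin⟩ := Finite.exists_min fun z : X × Y => h z.1 z.2
  exact ⟨h x₀ y₀, h₀ x₀ y₀, fun x => h x y₀ - h x₀ y₀, fun y => h x₀ y - h x₀ y₀,
    fun x => sub_nonneg.2 (hmin (x, y₀)), fun y => sub_nonneg.2 (hmin (x₀, y)),
    fun x y => by linarith [hh x x₀ y y₀]⟩

section Behaviour

variable {A B X Y : Type*}

structure IsClassicalBehaviour [Fintype A] [Fintype B] (p : A → B → X → Y → ℝ) : Prop where
  nonneg : ∀ a b x y, 0 ≤ p a b x y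
  sum_sum_eq_one : ∀ x y, ∑ a, ∑ b, p a b x y = 1
  nbts_fst : ∀ a x x' y, ∑ b, p a b x y = ∑ b, p a b x' y
  nbts_snd : ∀ b x y y', ∑ a, p a b x y = ∑ a, p a b x y'
  classicality : ∀ a b x x' y y', p a b x y + p a b x' y' = p a b x y' + p a b x' y

section ClassicalBehaviour

variable [Fintype A] [Fintype B] {p : A → B → X → Y → ℝ}

lemma isClassicalBehaviour_iff :
    IsClassicalBehaviour p ↔
      (∀ a b x y, 0 ≤ p a b x y) ∧ (∀ x y, ∑ a, ∑ b, p a b x y = 1) ∧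
      (∀ a x x' y, ∑ b, p a b x y = ∑ b, p a b x' y) ∧
      (∀ b x y y', ∑ a, p a b x y = ∑ a, p a b x y') ∧
      (∀ a b x x' y y', p a b x y + p a b x' y' = p a b x y' + p a b x' y) :=
  ⟨fun h => ⟨h.1, h.2, h.3, h.4, h.5⟩, fun ⟨h₁, h₂, h₃, h₄, h₅⟩ => ⟨h₁, h₂, h₃, h₄, h₅⟩⟩

lemma convex_setOf_isClassicalBehaviour :
    Convex ℝ {p : A → B → X → Y → ℝ | IsClassicalBehaviour p} := by
  intro p hp q hq s t hs ht hst
  have happ : ∀ a b x y, (s • p + t • q) a b x y = s * p a b x y + t * q a b x y :=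
    fun _ _ _ _ => rfl
  refine ⟨fun a b x y => ?_, fun x y => ?_, fun a x x' y => ?_, fun b x y y' => ?_,
    fun a b x x' y y' => ?_⟩ <;> simp only [happ, sum_add_distrib, ← mul_sum]
  · exact add_nonneg (mul_nonneg hs (hp.nonneg a b x y)) (mul_nonneg ht (hq.nonneg a b x y))
  · rw [hp.sum_sum_eq_one, hq.sum_sum_eq_one, mul_one, mul_one, hst]
  · rw [hp.nbts_fst a x x' y, hq.nbts_fst a x x' y]
  · rw [hp.nbts_snd b x y y', hq.nbts_snd b x y y']
  · linear_combination s * hp.classicality a b x x' y y' + t * hq.classicality a b x x' y y'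

lemma IsClassicalBehaviour.exists_eq_add_add [Finite X] [Finite Y] [Nonempty X] [Nonempty Y]
    (hp : IsClassicalBehaviour p) :
    ∃ (c : A → B → ℝ) (f : A → B → X → ℝ) (g : A → B → Y → ℝ),
      (∀ a b, 0 ≤ c a b) ∧ (∀ a b x, 0 ≤ f a b x) ∧ (∀ a b y, 0 ≤ g a b y) ∧
      ∀ a b x y, p a b x y = c a b + f a b x + g a b y := by
  choose c hc f g hf hg hcfg using fun a b =>
    exists_eq_add_add_of_add_eq_add (hp.nonneg a b) (hp.classicality a b)
  exact ⟨c, f, g, hc, hf, hg, hcfg⟩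

end ClassicalBehaviour

def classicalDeterministic (A B X Y : Type*) [DecidableEq A] [DecidableEq B] :
    Set (A → B → X → Y → ℝ) :=
  {p | (∃ (α : A) (β : B), p = fun a b _ _ => if a = α ∧ b = β then 1 else 0) ∨
    (∃ (α : A) (βx : X → B), p = fun a b x _ => if a = α ∧ b = βx x then 1 else 0) ∨
    (∃ (αy : Y → A) (β : B), p = fun a b _ y => if a = αy y ∧ b = β then 1 else 0)}

section Deterministic

variable [DecidableEq A] [DecidableEq B]

def fstOutcomeConst (α : A) : (X → B → ℝ) →ₗ[ℝ] (A → B → X → Y → ℝ) where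
  toFun q a b x _ := if a = α then q x b else 0
  map_add' q q' := by funext a b x y; by_cases a = α <;> simp [*]
  map_smul' r q := by funext a b x y; by_cases a = α <;> simp [*]

def sndOutcomeConst (β : B) : (Y → A → ℝ) →ₗ[ℝ] (A → B → X → Y → ℝ) where
  toFun q a b _ y := if b = β then q y a else 0
  map_add' q q' := by funext a b x y; by_cases b = β <;> simp [*]
  map_smul' r q := by funext a b x y; by_cases b = β <;> simp [*]

lemma mapsTo_fstOutcomeConst (α : A) :
    MapsTo (fstOutcomeConst (Y := Y) α)
      (range fun (βx : X → B) x b => if b = βx x then (1 : ℝ) else 0)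
      (classicalDeterministic A B X Y) := by
  rintro _ ⟨βx, rfl⟩
  exact Or.inr (Or.inl ⟨α, βx, by funext a b x y; simp [fstOutcomeConst, ite_and]⟩)

lemma mapsTo_sndOutcomeConst (β : B) :
    MapsTo (sndOutcomeConst (X := X) β)
      (range fun (αy : Y → A) y a => if a = αy y then (1 : ℝ) else 0)
      (classicalDeterministic A B X Y) := by
  rintro _ ⟨αy, rfl⟩
  exact Or.inr (Or.inr ⟨αy, β, by
    funext a b x y
    by_cases b = β <;> simp [sndOutcomeConst, *]⟩)

variable [Fintype A] [Fintype B] {p : A → B → X → Y → ℝ}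

lemma IsClassicalBehaviour.of_mem_classicalDeterministic
    (hp : p ∈ classicalDeterministic A B X Y) : IsClassicalBehaviour p := by
  rcases hp with ⟨α, β, rfl⟩ | ⟨α, βx, rfl⟩ | ⟨αy, β, rfl⟩
  · exact ⟨fun _ _ _ _ => by positivity, by simp [ite_and], fun _ _ _ _ => rfl,
      fun _ _ _ _ => rfl, fun _ _ _ _ _ _ => rfl⟩
  · exact ⟨fun _ _ _ _ => by positivity, by simp [ite_and], by simp [ite_and],
      fun _ _ _ _ => rfl, fun _ _ _ _ _ _ => rfl⟩
  · exact ⟨fun _ _ _ _ => by positivity, by simp [ite_and], fun _ _ _ _ => rfl,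
      by simp [ite_and], fun _ _ _ _ _ _ => add_comm _ _⟩

lemma IsClassicalBehaviour.of_mem_convexHull
    (hp : p ∈ convexHull ℝ (classicalDeterministic A B X Y)) : IsClassicalBehaviour p :=
  convexHull_min (fun _ => IsClassicalBehaviour.of_mem_classicalDeterministic)
    convex_setOf_isClassicalBehaviour hp

theorem IsClassicalBehaviour.mem_Ici_smul_convexHull [Fintype X] [Fintype Y] [DecidableEq X]
    [DecidableEq Y] [Nonempty A] [Nonempty B] [Nonempty X] [Nonempty Y]
    (hp : IsClassicalBehaviour p) :
    p ∈ Ici (0 : ℝ) • convexHull ℝ (classicalDeterministic A B X Y) := by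
  obtain ⟨c, f, g, hc, hf, hg, hcfg⟩ := hp.exists_eq_add_add
  obtain ⟨x₀⟩ := ‹Nonempty X›
  obtain ⟨y₀⟩ := ‹Nonempty Y›
  have hf_rows : ∀ a x x', ∑ b, f a b x = ∑ b, f a b x' := fun a x x' => by
    have := hp.nbts_fst a x x' y₀
    simp only [hcfg, sum_add_distrib] at this
    linarith
  have hg_rows : ∀ b y y', ∑ a, g a b y = ∑ a, g a b y' := fun b y y' => by
    have := hp.nbts_snd b x₀ y y'
    simp only [hcfg, sum_add_distrib] at this
    linarith
  have hp_eq : p = ∑ t : A × B, c t.1 t.2 •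
        (fun a b (_ : X) (_ : Y) => if a = t.1 ∧ b = t.2 then (1 : ℝ) else 0) +
      ∑ α, fstOutcomeConst α (fun x b => f α b x) +
      ∑ β, sndOutcomeConst β (fun y a => g a β y) := by
    funext a b x y
    simp [Finset.sum_apply, fstOutcomeConst, sndOutcomeConst, hcfg, ite_and,
      Fintype.sum_prod_type]
  have hS : Convex ℝ (convexHull ℝ (classicalDeterministic A B X Y)) := convex_convexHull ℝ _
  have hne : (convexHull ℝ (classicalDeterministic A B X Y)).Nonempty :=
    ⟨_, subset_convexHull ℝ _ (Or.inl ⟨Classical.arbitrary A, Classical.arbitrary B, rfl⟩)⟩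
  rw [hp_eq]
  refine hS.add_mem_Ici_smul (hS.add_mem_Ici_smul (hS.sum_mem_Ici_smul hne fun t _ => ?_)
    (hS.sum_mem_Ici_smul hne fun α _ => ?_)) (hS.sum_mem_Ici_smul hne fun β _ => ?_)
  · exact smul_mem_smul (hc t.1 t.2) (subset_convexHull ℝ _ (Or.inl ⟨t.1, t.2, rfl⟩))
  · exact (fstOutcomeConst α).map_mem_Ici_smul_convexHull (mapsTo_fstOutcomeConst α)
      (mem_Ici_smul_convexHull_range_of_sum_eq (fun x b => hf α b x) (hf_rows α))
  · exact (sndOutcomeConst β).map_mem_Ici_smul_convexHull (mapsTo_sndOutcomeConst β)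
      (mem_Ici_smul_convexHull_range_of_sum_eq (fun y a => hg a β y) (hg_rows β))

theorem mem_convexHull_classicalDeterministic_iff_isClassicalBehaviour [Fintype X] [Fintype Y]
    [DecidableEq X] [DecidableEq Y] [Nonempty A] [Nonempty B] [Nonempty X] [Nonempty Y] :
    p ∈ convexHull ℝ (classicalDeterministic A B X Y) ↔ IsClassicalBehaviour p := by
  refine ⟨IsClassicalBehaviour.of_mem_convexHull, fun hp => ?_⟩
  obtain ⟨t, -, q, hq, rfl⟩ := hp.mem_Ici_smul_convexHull
  obtain ⟨x₀⟩ := ‹Nonempty X›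
  obtain ⟨y₀⟩ := ‹Nonempty Y›
  have ht : t = 1 := by
    simpa [← mul_sum, (IsClassicalBehaviour.of_mem_convexHull hq).sum_sum_eq_one] using
      hp.sum_sum_eq_one x₀ y₀
  simpa [ht] using hq

end Deterministic

end Behaviour

/-- For two parties with `d` outcomes and `m` inputs each, a behaviour
lies in the convex hull of the classical deterministic behaviours iff it satisfies
positivity, normalisation, the NBTS conditions, and the classicality equalities. -/
theorem mem_convexHull_classical_deterministic_iff (d m : ℕ)
    (hd : 0 < d) (hm : 0 < m)
    (p : Fin d → Fin d → Fin m → Fin m → ℝ) :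
    p ∈ convexHull ℝ
      ({p : Fin d → Fin d → Fin m → Fin m → ℝ |
          (∃ α β : Fin d, p = fun a b _ _ =>
              if a = α ∧ b = β then (1 : ℝ) else 0) ∨
          (∃ (α : Fin d) (βx : Fin m → Fin d), p = fun a b x _ =>
              if a = α ∧ b = βx x then (1 : ℝ) else 0) ∨
          (∃ (αy : Fin m → Fin d) (β : Fin d), p = fun a b _ y =>
              if a = αy y ∧ b = β then (1 : ℝ) else 0)})
    ↔
    ((∀ a b x y, 0 ≤ p a b x y) ∧
     (∀ x y, ∑ a, ∑ b, p a b x y = 1) ∧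
     (∀ a x x' y, ∑ b, p a b x y = ∑ b, p a b x' y) ∧
     (∀ b x y y', ∑ a, p a b x y = ∑ a, p a b x y') ∧
     (∀ a b x x' y y',
        p a b x y + p a b x' y' = p a b x y' + p a b x' y)) := by
  have : Nonempty (Fin d) := Fin.pos_iff_nonempty.1 hd
  have : Nonempty (Fin m) := Fin.pos_iff_nonempty.1 hm
  exact mem_convexHull_classicalDeterministic_iff_isClassicalBehaviour.trans
    isClassicalBehaviour_iff
end

section
/- A binary two-party behaviour p lies in the convex hull of the 8 deterministic behaviours of the form p(a,b|x,y) = 1 iff a = α and b = β·x ⊕ γ (for α, β, γ ∈ {0,1}, ⊕ addition mod 2) if and only if p is nonnegative, normalised, satisfies p(a,b|x,y) = p(a,b|x,0) for all a,b,x,y (independence of y), and ∑_b p(a,b|x,y) = ∑_b p(a,b|x',y) for all a,x,x',y (Alice's marginal is independent of x). Consequently, in the sequential-timing (A before B) scenario the classical polytope is exactly this set. -/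
/-!
A behaviour `p` satisfying the constraints factorises as `p(a,b|x,y) = p_A(a) · p_B(b|a,x)`,
with `p_A` Alice's marginal (independent of `x`) and `p_B` the conditional distribution of `b`,
so it is classical. A classical behaviour is the mixture, with weights `p_A(α)`, of behaviours in
which Alice outputs `α` and Bob answers with the kernel `p_B(·|α,·)`. The kernels `X → Δ(B)` form
a product of simplices, whose vertices are the deterministic maps `f : X → B`; for binary inputs
these are exactly the maps `x ↦ β·x ⊕ γ`. Conversely the constraints are linear and hold for
deterministic behaviours, so they hold on their convex hull.
-/

open Set Finset

lemma mem_convexHull_deterministic_kernels {X B : Type*} [Finite X] [Fintype B] [DecidableEq B]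
    {q : X → B → ℝ} (hq : ∀ x, q x ∈ stdSimplex ℝ B) :
    q ∈ convexHull ℝ (range fun (f : X → B) x b => if f x = b then (1 : ℝ) else 0) := by
  have hpi : q ∈ convexHull ℝ
      (univ.pi fun _ => range fun i j : B => if i = j then (1 : ℝ) else 0) := by
    rw [convexHull_pi]
    exact fun x _ => (convexHull_basis_eq_stdSimplex ℝ B).symm ▸ hq x
  refine convexHull_mono ?_ hpi
  intro r hr
  choose f hf using fun x => hr x (mem_univ x)
  exact ⟨f, funext hf⟩

section

variable {A B X Y : Type*}

def deterministicBehaviours [DecidableEq A] [DecidableEq B] : Set (A → B → X → Y → ℝ) :=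
  {p | ∃ (α : A) (f : X → B), p = fun a b x _ => if a = α ∧ b = f x then 1 else 0}

def fixAliceOutput [DecidableEq A] (α : A) : (X → B → ℝ) →ₗ[ℝ] (A → B → X → Y → ℝ) where
  toFun q a b x _ := if a = α then q x b else 0
  map_add' q r := by ext a b x y; split_ifs <;> simp [*]
  map_smul' c q := by ext a b x y; split_ifs <;> simp [*]

variable [Fintype A] [Fintype B]

def classicalSeqBehaviours : Set (A → B → X → Y → ℝ) :=
  {p | ∃ (pA : A → ℝ) (pB : B → A → X → ℝ),
    (∀ a, 0 ≤ pA a) ∧ (∑ a, pA a = 1) ∧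
    (∀ b a x, 0 ≤ pB b a x) ∧ (∀ a x, ∑ b, pB b a x = 1) ∧
    (∀ a b x y, p a b x y = pA a * pB b a x)}

def sequentialPolytope (y₀ : Y) : Set (A → B → X → Y → ℝ) :=
  {p | (∀ a b x y, 0 ≤ p a b x y) ∧
    (∀ x y, ∑ a, ∑ b, p a b x y = 1) ∧
    (∀ a b x y, p a b x y = p a b x y₀) ∧
    (∀ a x x' y, ∑ b, p a b x y = ∑ b, p a b x' y)}

lemma convex_sequentialPolytope (y₀ : Y) :
    Convex ℝ (sequentialPolytope y₀ : Set (A → B → X → Y → ℝ)) := by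
  rintro p ⟨hp0, hp1, hpy, hpx⟩ q ⟨hq0, hq1, hqy, hqx⟩ s t hs ht hst
  refine ⟨fun a b x y => ?_, fun x y => ?_, fun a b x y => ?_, fun a x x' y => ?_⟩ <;>
    simp only [Pi.add_apply, Pi.smul_apply, smul_eq_mul, sum_add_distrib, ← mul_sum]
  · have := hp0 a b x y; have := hq0 a b x y; positivity
  · rw [hp1, hq1, mul_one, mul_one, hst]
  · rw [hpy, hqy]
  · rw [hpx a x x', hqx a x x']

lemma classicalSeqBehaviours_subset_sequentialPolytope (y₀ : Y) :
    (classicalSeqBehaviours : Set (A → B → X → Y → ℝ)) ⊆ sequentialPolytope y₀ := by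
  rintro p ⟨pA, pB, hA0, hA1, hB0, hB1, hp⟩
  obtain rfl : p = fun a b x _ => pA a * pB b a x := by ext a b x y; exact hp a b x y
  have marginal : ∀ a x, ∑ b, pA a * pB b a x = pA a := fun a x => by
    rw [← mul_sum, hB1, mul_one]
  exact ⟨fun a b x y => mul_nonneg (hA0 a) (hB0 b a x), fun x y => by simp only [marginal, hA1],
    fun a b x y => rfl, fun a x x' y => by simp only [marginal]⟩

lemma sequentialPolytope_subset_classicalSeqBehaviours [Nonempty X] (y₀ : Y) :
    (sequentialPolytope y₀ : Set (A → B → X → Y → ℝ)) ⊆ classicalSeqBehaviours := by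
  rintro p ⟨hp0, hp1, hpy, hpx⟩
  obtain ⟨x₀⟩ := ‹Nonempty X›
  set pA : A → ℝ := fun a => ∑ b, p a b x₀ y₀
  have marginal : ∀ a x, ∑ b, p a b x y₀ = pA a := fun a x => hpx a x x₀ y₀
  have vanish : ∀ a, pA a = 0 → ∀ b x, p a b x y₀ = 0 := fun a ha b x =>
    (sum_eq_zero_iff_of_nonneg fun b _ => hp0 a b x y₀).1 (by rw [marginal, ha]) b (mem_univ b)
  -- Where `pA a = 0` any distribution will do for Bob; his marginal is a convenient one.
  refine ⟨pA, fun b a x => if pA a = 0 then ∑ a', p a' b x y₀ else p a b x y₀ / pA a,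
    fun a => sum_nonneg fun b _ => hp0 a b x₀ y₀, hp1 x₀ y₀, fun b a x => ?_, fun a x => ?_,
    fun a b x y => ?_⟩ <;> by_cases ha : pA a = 0 <;> simp only [ha, ↓reduceIte]
  · exact sum_nonneg fun a' _ => hp0 a' b x y₀
  · exact div_nonneg (hp0 a b x y₀) (sum_nonneg fun b _ => hp0 a b x₀ y₀)
  · rw [sum_comm, hp1]
  · rw [← sum_div, marginal, div_self ha]
  · rw [hpy, zero_mul, vanish a ha]
  · rw [hpy, mul_div_cancel₀ _ ha]

theorem classicalSeqBehaviours_eq_sequentialPolytope [Nonempty X] (y₀ : Y) :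
    (classicalSeqBehaviours : Set (A → B → X → Y → ℝ)) = sequentialPolytope y₀ :=
  (classicalSeqBehaviours_subset_sequentialPolytope y₀).antisymm
    (sequentialPolytope_subset_classicalSeqBehaviours y₀)

variable [DecidableEq A] [DecidableEq B]

lemma deterministicBehaviours_subset_classicalSeqBehaviours :
    (deterministicBehaviours : Set (A → B → X → Y → ℝ)) ⊆ classicalSeqBehaviours := by
  rintro p ⟨α, f, rfl⟩
  refine ⟨fun a => if a = α then 1 else 0, fun b _ x => if b = f x then 1 else 0,
    fun a => by positivity, by simp, fun b a x => by positivity, fun a x => by simp,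
    fun a b x y => by simp only [ite_zero_mul_ite_zero, mul_one]⟩

lemma classicalSeqBehaviours_subset_convexHull_deterministicBehaviours [Finite X] :
    (classicalSeqBehaviours : Set (A → B → X → Y → ℝ)) ⊆ convexHull ℝ deterministicBehaviours := by
  rintro p ⟨pA, pB, hA0, hA1, hB0, hB1, hp⟩
  have hdecomp : p = ∑ α, pA α • fixAliceOutput α (fun x b => pB b α x) := by
    ext a b x y
    simp [fixAliceOutput, Finset.sum_apply, hp]
  have hfix : ∀ α, fixAliceOutput α (fun x b => pB b α x) ∈
      convexHull ℝ (deterministicBehaviours : Set (A → B → X → Y → ℝ)) := by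
    intro α
    have hker := mem_convexHull_deterministic_kernels (q := fun x b => pB b α x)
      fun x => ⟨fun b => hB0 b α x, hB1 α x⟩
    have := mem_image_of_mem (fixAliceOutput α (Y := Y)) hker
    rw [LinearMap.image_convexHull, ← range_comp] at this
    refine convexHull_mono ?_ this
    rintro _ ⟨f, rfl⟩
    exact ⟨α, f, by ext a b x y; simp [fixAliceOutput, ite_and, eq_comm]⟩
  rw [hdecomp]
  exact (convex_convexHull ℝ _).sum_mem (fun α _ => hA0 α) hA1 fun α _ => hfix α

theorem convexHull_deterministicBehaviours [Finite X] [Nonempty X] (y₀ : Y) :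
    convexHull ℝ (deterministicBehaviours : Set (A → B → X → Y → ℝ)) = sequentialPolytope y₀ :=
  (convexHull_min
      (deterministicBehaviours_subset_classicalSeqBehaviours.trans
        (classicalSeqBehaviours_subset_sequentialPolytope y₀))
      (convex_sequentialPolytope y₀)).antisymm
    ((sequentialPolytope_subset_classicalSeqBehaviours y₀).trans
      classicalSeqBehaviours_subset_convexHull_deterministicBehaviours)

end

lemma Fin.exists_mul_add_eq (f : Fin 2 → Fin 2) : ∃ β γ : Fin 2, ∀ x, f x = β * x + γ :=
  ⟨f 1 - f 0, f 0, fun x => by fin_cases x <;> simp⟩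

lemma setOf_mul_add_eq_deterministicBehaviours :
    {p : Fin 2 → Fin 2 → Fin 2 → Fin 2 → ℝ |
      ∃ α β γ : Fin 2, p = fun a b x _ => if a = α ∧ b = β * x + γ then (1 : ℝ) else 0} =
    deterministicBehaviours := by
  ext p
  constructor
  · rintro ⟨α, β, γ, rfl⟩
    exact ⟨α, fun x => β * x + γ, rfl⟩
  · rintro ⟨α, f, rfl⟩
    obtain ⟨β, γ, hf⟩ := Fin.exists_mul_add_eq f
    exact ⟨α, β, γ, by simp only [hf]⟩

/-- A binary behaviour lies in the convex hull of the 8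
deterministic behaviours `p(a,b|x,y) = 1` iff `a = α`, `b = β·x ⊕ γ` if and only
if it is nonnegative, normalised, independent of `y`, and Alice's marginal is
independent of `x`; consequently, in the sequential-timing (A before B) scenario
the classical polytope (behaviours of the form `p(a,b|x,y) = p_A(a)·p_B(b|a,x)`)
is exactly this set. (Here `Fin 2` arithmetic is mod 2.) -/
theorem sequential_classical_polytope_characterisation :
    (∀ p : Fin 2 → Fin 2 → Fin 2 → Fin 2 → ℝ,
      p ∈ convexHull ℝ
        {p : Fin 2 → Fin 2 → Fin 2 → Fin 2 → ℝ |
          ∃ α β γ : Fin 2, p = fun a b x _ =>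
            if a = α ∧ b = β * x + γ then (1 : ℝ) else 0}
      ↔
      ((∀ a b x y, 0 ≤ p a b x y) ∧
       (∀ x y, ∑ a, ∑ b, p a b x y = 1) ∧
       (∀ a b x y, p a b x y = p a b x 0) ∧
       (∀ a x x' y, ∑ b, p a b x y = ∑ b, p a b x' y)))
    ∧
    {p : Fin 2 → Fin 2 → Fin 2 → Fin 2 → ℝ |
      ∃ (pA : Fin 2 → ℝ) (pB : Fin 2 → Fin 2 → Fin 2 → ℝ),
        (∀ a, 0 ≤ pA a) ∧ (∑ a, pA a = 1) ∧
        (∀ b a x, 0 ≤ pB b a x) ∧ (∀ a x, ∑ b, pB b a x = 1) ∧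
        (∀ a b x y, p a b x y = pA a * pB b a x)} =
    {p : Fin 2 → Fin 2 → Fin 2 → Fin 2 → ℝ |
      (∀ a b x y, 0 ≤ p a b x y) ∧
      (∀ x y, ∑ a, ∑ b, p a b x y = 1) ∧
      (∀ a b x y, p a b x y = p a b x 0) ∧
      (∀ a x x' y, ∑ b, p a b x y = ∑ b, p a b x' y)} := by
  rw [setOf_mul_add_eq_deterministicBehaviours, convexHull_deterministicBehaviours (0 : Fin 2)]
  exact ⟨fun p => Iff.rfl, classicalSeqBehaviours_eq_sequentialPolytope 0⟩
end
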